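/- arXiv:2206.08968 — 10 statements merged into one kernel-verified Lean document; each statement's English description precedes it below -/
import Mathlib

section
/- Let N ≥ 2 and m ≥ 1 be integers. For k = 0, …, N−1 let A_k, B_k, C_k be real m×m matrices with A_k and B_k symmetric, and suppose that each 2m×2m block matrix H_k = [[A_k, C_k], [C_kᵀ, B_k]] is positive semidefinite. Then the (N−1)m × (N−1)m block tridiagonal matrix H with diagonal blocks D_k = B_{k−1} + A_k (k = 1, …, N−1), superdiagonal blocks C_k (k = 1, …, N−2) and subdiagonal blocks C_kᵀ is positive semidefinite. -/
open Matrix Finset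

/-- The `(N-1)m × (N-1)m` symmetric block tridiagonal matrix whose diagonal blocks are
`D_k = B_{k-1} + A_k` for `k = 1, …, N-1`, whose superdiagonal blocks are `C_k` for
`k = 1, …, N-2`, and whose subdiagonal blocks are `C_kᵀ`.  Block rows/columns are
0-indexed: block index `r : Fin (N-1)` corresponds to `k = r + 1`. -/
def blockTriDiag (N m : ℕ) (A B C : ℕ → Matrix (Fin m) (Fin m) ℝ) :
    Matrix (Fin (N - 1) × Fin m) (Fin (N - 1) × Fin m) ℝ :=
  fun p q =>
    if (p.1 : ℕ) = (q.1 : ℕ) then (B (p.1 : ℕ) + A ((p.1 : ℕ) + 1)) p.2 q.2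
    else if (p.1 : ℕ) + 1 = (q.1 : ℕ) then C ((p.1 : ℕ) + 1) p.2 q.2
    else if (q.1 : ℕ) + 1 = (p.1 : ℕ) then C ((q.1 : ℕ) + 1) q.2 p.2
    else 0

/-- The embedding matrix selecting the pair of consecutive blocks `(k-1, k)`. -/
def blockEmb (N m k : ℕ) : Matrix (Fin m ⊕ Fin m) (Fin (N - 1) × Fin m) ℝ :=
  fun a p =>
    match a with
    | Sum.inl i => if (p.1 : ℕ) + 1 = k ∧ p.2 = i then 1 else 0
    | Sum.inr i => if (p.1 : ℕ) = k ∧ p.2 = i then 1 else 0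

lemma blockEmb_conj_apply (N m k : ℕ) (M : Matrix (Fin m ⊕ Fin m) (Fin m ⊕ Fin m) ℝ)
    (p q : Fin (N - 1) × Fin m) :
    ((blockEmb N m k)ᴴ * M * blockEmb N m k) p q =
      (if (p.1 : ℕ) + 1 = k ∧ (q.1 : ℕ) + 1 = k then M (Sum.inl p.2) (Sum.inl q.2) else 0) +
      (if (p.1 : ℕ) + 1 = k ∧ (q.1 : ℕ) = k then M (Sum.inl p.2) (Sum.inr q.2) else 0) +
      (if (p.1 : ℕ) = k ∧ (q.1 : ℕ) + 1 = k then M (Sum.inr p.2) (Sum.inl q.2) else 0) +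
      (if (p.1 : ℕ) = k ∧ (q.1 : ℕ) = k then M (Sum.inr p.2) (Sum.inr q.2) else 0) := by
  simp only [Matrix.mul_apply, Matrix.conjTranspose_apply, blockEmb, Fintype.sum_sum_type,
    star_trivial, ite_mul, mul_ite, one_mul, mul_one, zero_mul, mul_zero, ite_and]
  simp [Finset.sum_ite_eq, Finset.sum_ite_eq', Finset.sum_add_distrib]
  split_ifs <;> ring

lemma blockTriDiag_eq_sum (N m : ℕ) (A B C : ℕ → Matrix (Fin m) (Fin m) ℝ) :
    blockTriDiag N m A B C =
      ∑ k ∈ Finset.range N,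
        (blockEmb N m k)ᴴ * (Matrix.fromBlocks (A k) (C k) (C k)ᵀ (B k)) * blockEmb N m k := by
  ext p q
  rw [Matrix.sum_apply]
  simp only [blockEmb_conj_apply, Matrix.fromBlocks_apply₁₁, Matrix.fromBlocks_apply₁₂,
    Matrix.fromBlocks_apply₂₁, Matrix.fromBlocks_apply₂₂, Matrix.transpose_apply]
  rw [Finset.sum_add_distrib, Finset.sum_add_distrib, Finset.sum_add_distrib]
  simp only [ite_and]
  rw [Finset.sum_ite_eq, Finset.sum_ite_eq, Finset.sum_ite_eq, Finset.sum_ite_eq]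
  have hp := p.1.2
  have hq := q.1.2
  have h1 : (p.1:ℕ)+1 ∈ Finset.range N := by simp; omega
  have h2 : (p.1:ℕ) ∈ Finset.range N := by simp; omega
  have h3 : (q.1:ℕ)+1 ∈ Finset.range N := by simp; omega
  have h4 : (q.1:ℕ) ∈ Finset.range N := by simp; omega
  simp only [h1, h2, h3, h4, if_true, blockTriDiag, Matrix.add_apply]
  by_cases e1 : (p.1 : ℕ) = (q.1 : ℕ)
  · have n1 : ¬((p.1:ℕ) = (p.1:ℕ) + 1) := by omega
    have n2 : ¬((p.1:ℕ) + 1 = (p.1:ℕ)) := by omega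
    simp only [← e1, if_pos rfl, if_neg n1, if_neg n2, add_zero, zero_add]
    split_ifs <;> ring
  rw [if_neg e1]
  by_cases e2 : (p.1:ℕ) + 1 = (q.1:ℕ)
  · have n3 : ¬((q.1:ℕ) + 1 = (p.1:ℕ) + 1) := by omega
    have n4 : ¬((q.1:ℕ) + 1 = (p.1:ℕ)) := by omega
    have n5 : ¬((q.1:ℕ) = (p.1:ℕ)) := by omega
    simp only [if_pos e2, if_neg n3, if_neg n4, if_neg n5, if_pos e2.symm, add_zero, zero_add]
  rw [if_neg e2]
  by_cases e3 : (q.1:ℕ) + 1 = (p.1:ℕ)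
  · have n6 : ¬((q.1:ℕ) + 1 = (p.1:ℕ) + 1) := by omega
    have n7 : ¬((q.1:ℕ) = (p.1:ℕ) + 1) := by omega
    have n8 : ¬((q.1:ℕ) = (p.1:ℕ)) := by omega
    simp only [if_pos e3, if_neg n6, if_neg n7, if_neg n8, add_zero, zero_add]
    rw [e3]
  · have n9 : ¬((q.1:ℕ) + 1 = (p.1:ℕ) + 1) := by omega
    have n10 : ¬((q.1:ℕ) = (p.1:ℕ) + 1) := by omega
    have n11 : ¬((q.1:ℕ) = (p.1:ℕ)) := by omega
    simp only [if_neg e3, if_neg n9, if_neg n10, if_neg n11, add_zero]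

theorem blockTriDiag_posSemidef
    (N m : ℕ) (hN : 2 ≤ N) (hm : 1 ≤ m)
    (A B C : ℕ → Matrix (Fin m) (Fin m) ℝ)
    (hA : ∀ k < N, (A k).IsSymm) (hB : ∀ k < N, (B k).IsSymm)
    (hHk : ∀ k < N, (Matrix.fromBlocks (A k) (C k) (C k)ᵀ (B k)).PosSemidef) :
    (blockTriDiag N m A B C).PosSemidef := by
  rw [blockTriDiag_eq_sum]
  refine Finset.sum_induction _ _ (fun a b ha hb => ha.add hb) Matrix.PosSemidef.zero ?_
  intro k hk
  exact (hHk k (Finset.mem_range.mp hk)).conjTranspose_mul_mul_same _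
end

section
/- Let N ≥ 2 and m ≥ 1 be integers. For k = 0, …, N−1 let A_k, B_k, C_k be real m×m matrices with A_k and B_k symmetric, and suppose that each 2m×2m block matrix H_k = [[A_k, C_k], [C_kᵀ, B_k]] is positive semidefinite. If, in addition, A_k is positive definite for every k = 0, …, N−1, or B_k is positive definite for every k = 0, …, N−1, then the (N−1)m × (N−1)m block tridiagonal matrix H with diagonal blocks D_k = B_{k−1} + A_k (k = 1, …, N−1), superdiagonal blocks C_k (k = 1, …, N−2) and subdiagonal blocks C_kᵀ is positive definite. -/
open Matrix Finset

/-- Moves the blocks of `x` to the paper's block indices `1, …, n`, padding with zeros. -/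
def padBlocks {α κ : Type*} [Zero α] {n : ℕ} (x : Fin n × κ → α) : ℕ → κ → α
  | 0 => 0
  | k + 1 => if h : k < n then fun i => x (⟨k, h⟩, i) else 0

section PadBlocks

variable {α κ : Type*} [Zero α]

theorem padBlocks_succ {n : ℕ} (x : Fin n × κ → α) (r : Fin n) :
    padBlocks x (r + 1) = fun i => x (r, i) := by
  simp [padBlocks]

theorem padBlocks_of_le {N k : ℕ} (x : Fin (N - 1) × κ → α) (h : N ≤ k) :
    padBlocks x k = 0 := by
  cases k with
  | zero => rfl
  | succ k => simp [padBlocks, show ¬k < N - 1 by omega]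

end PadBlocks

section QuadraticForms

variable {R ι κ : Type*} [CommRing R] [Fintype ι] [Fintype κ]

theorem sumElim_dotProduct_fromBlocks_mulVec
    (A : Matrix ι ι R) (C : Matrix ι κ R) (B : Matrix κ κ R) (u : ι → R) (w : κ → R) :
    Sum.elim u w ⬝ᵥ (fromBlocks A C Cᵀ B *ᵥ Sum.elim u w) =
      u ⬝ᵥ (A *ᵥ u) + 2 * (u ⬝ᵥ (C *ᵥ w)) + w ⬝ᵥ (B *ᵥ w) := by
  rw [fromBlocks_mulVec, Sum.elim_comp_inl, Sum.elim_comp_inr, sumElim_dotProduct_sumElim,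
    dotProduct_add, dotProduct_add, dotProduct_transpose_mulVec]
  ring

theorem dotProduct_mulVec_eq_sum_blocks (M : Matrix (ι × κ) (ι × κ) R) (x : ι × κ → R) :
    x ⬝ᵥ (M *ᵥ x) = ∑ r, ∑ s,
      (fun i => x (r, i)) ⬝ᵥ (of (fun i j => M (r, i) (s, j)) *ᵥ fun j => x (s, j)) := by
  simp only [dotProduct, mulVec, of_apply, Fintype.sum_prod_type, Finset.mul_sum]
  exact sum_congr rfl fun r _ => sum_comm

theorem sum_range_sum_range_tridiag (n : ℕ) (a c : ℕ → R)
    (hc : ∀ r, n ≤ r + 1 → c r = 0) :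
    ∑ r ∈ range n, ∑ s ∈ range n,
      (if r = s then a r else if r + 1 = s then c r else if s + 1 = r then c s else 0) =
      ∑ r ∈ range n, (a r + 2 * c r) := by
  have hsplit (r s : ℕ) :
      (if r = s then a r else if r + 1 = s then c r else if s + 1 = r then c s else 0) =
        (if r = s then a r else 0) + (if r + 1 = s then c r else 0) +
          (if s + 1 = r then c s else 0) := by
    split_ifs <;> first | omega | simp
  have hc' (r : ℕ) (_ : r ∈ range n) : (if r + 1 ∈ range n then c r else 0) = c r := by
    split_ifs with h
    · rfl
    · exact (hc r (by simpa using h)).symm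
  simp only [hsplit, sum_add_distrib, sum_ite_eq]
  rw [sum_comm (f := fun r s => if s + 1 = r then c s else 0)]
  simp only [sum_ite_eq, sum_congr rfl hc', sum_ite_mem, inter_self, two_mul, sum_add_distrib]
  ring

theorem sum_range_sumElim_dotProduct_fromBlocks_mulVec (N : ℕ) (A B C : ℕ → Matrix ι ι R)
    (v : ℕ → ι → R) (h0 : v 0 = 0) (hN : v N = 0) :
    ∑ k ∈ range N,
        Sum.elim (v k) (v (k + 1)) ⬝ᵥ
          (fromBlocks (A k) (C k) (C k)ᵀ (B k) *ᵥ Sum.elim (v k) (v (k + 1))) =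
      ∑ r ∈ range (N - 1), (v (r + 1) ⬝ᵥ ((B r + A (r + 1)) *ᵥ v (r + 1)) +
        2 * (v (r + 1) ⬝ᵥ (C (r + 1) *ᵥ v (r + 2)))) := by
  cases N with
  | zero => simp
  | succ n =>
    simp only [sumElim_dotProduct_fromBlocks_mulVec, sum_add_distrib]
    rw [sum_range_succ' (fun k => v k ⬝ᵥ (A k *ᵥ v k)), sum_range_succ' (fun k => 2 * _),
      sum_range_succ (fun k => v (k + 1) ⬝ᵥ _), h0, hN]
    simp only [add_mulVec, dotProduct_add, zero_dotProduct, mulVec_zero, dotProduct_zero,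
      sum_add_distrib, Nat.add_sub_cancel]
    ring

end QuadraticForms

section Definiteness

variable {R ι : Type*} [CommRing R] [PartialOrder R] [StarRing R] [TrivialStar R] [Fintype ι]

theorem Matrix.PosDef.eq_zero_of_dotProduct_mulVec_self_eq_zero {M : Matrix ι ι R}
    (hM : M.PosDef) {u : ι → R} (h : u ⬝ᵥ (M *ᵥ u) = 0) : u = 0 := by
  by_contra hu
  simpa [h] using hM.dotProduct_mulVec_pos hu

theorem forall_le_eq_zero_of_sumElim_dotProduct_fromBlocks_mulVec_eq_zero {N : ℕ}
    {A B C : ℕ → Matrix ι ι R}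
    (hdef : (∀ k < N, (A k).PosDef) ∨ (∀ k < N, (B k).PosDef))
    {v : ℕ → ι → R} (h0 : v 0 = 0) (hN : v N = 0)
    (hq : ∀ k < N, Sum.elim (v k) (v (k + 1)) ⬝ᵥ
      (fromBlocks (A k) (C k) (C k)ᵀ (B k) *ᵥ Sum.elim (v k) (v (k + 1))) = 0) :
    ∀ k ≤ N, v k = 0 := by
  rcases hdef with hA | hB
  · exact fun k hk => Nat.decreasingInduction (motive := fun k _ => v k = 0)
      (fun k hk ih => (hA k hk).eq_zero_of_dotProduct_mulVec_self_eq_zero <| by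
        simpa [ih, sumElim_dotProduct_fromBlocks_mulVec] using hq k hk) hN hk
  · intro k hk
    induction k with
    | zero => exact h0
    | succ k ih =>
      refine (hB k (by omega)).eq_zero_of_dotProduct_mulVec_self_eq_zero ?_
      simpa [ih (by omega), sumElim_dotProduct_fromBlocks_mulVec] using hq k (by omega)

end Definiteness

section BlockTriDiag

variable (N m : ℕ) (A B C : ℕ → Matrix (Fin m) (Fin m) ℝ)

theorem blockTriDiag_block (r s : Fin (N - 1)) :
    of (fun i j => blockTriDiag N m A B C (r, i) (s, j)) =
      if (r : ℕ) = s then B r + A (r + 1) else if (r : ℕ) + 1 = s then C (r + 1)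
      else if (s : ℕ) + 1 = r then (C (s + 1))ᵀ else 0 := by
  ext i j
  simp only [blockTriDiag, of_apply]
  split_ifs <;> rfl

theorem blockTriDiag_isHermitian (hA : ∀ k < N, (A k).IsHermitian)
    (hB : ∀ k < N, (B k).IsHermitian) : (blockTriDiag N m A B C).IsHermitian := by
  ext ⟨r, i⟩ ⟨s, j⟩
  have hr := r.isLt
  simp only [conjTranspose_apply, star_trivial, blockTriDiag]
  split_ifs with hsr <;> try omega
  all_goals try rfl
  rw [hsr]
  exact ((hB r (by omega)).add (hA (r + 1) (by omega))).apply i j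

theorem dotProduct_blockTriDiag_mulVec (x : Fin (N - 1) × Fin m → ℝ) :
    x ⬝ᵥ (blockTriDiag N m A B C *ᵥ x) = ∑ r ∈ range (N - 1),
      (padBlocks x (r + 1) ⬝ᵥ ((B r + A (r + 1)) *ᵥ padBlocks x (r + 1)) +
        2 * (padBlocks x (r + 1) ⬝ᵥ (C (r + 1) *ᵥ padBlocks x (r + 2)))) := by
  rw [dotProduct_mulVec_eq_sum_blocks, ← sum_range_sum_range_tridiag,
    ← Fin.sum_univ_eq_sum_range]
  · refine sum_congr rfl fun r _ => ?_
    rw [← Fin.sum_univ_eq_sum_range]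
    refine sum_congr rfl fun s _ => ?_
    rw [blockTriDiag_block, ← padBlocks_succ, ← padBlocks_succ]
    split_ifs with hrs hrs' hsr
    · rw [hrs]
    · rw [← hrs']
    · rw [dotProduct_transpose_mulVec, ← hsr]
    · rw [zero_mulVec, dotProduct_zero]
  · intro r hr
    rw [padBlocks_of_le (k := r + 2) x (by omega), mulVec_zero, dotProduct_zero]

theorem dotProduct_blockTriDiag_mulVec_eq_sum_fromBlocks (x : Fin (N - 1) × Fin m → ℝ) :
    x ⬝ᵥ (blockTriDiag N m A B C *ᵥ x) =
      ∑ k ∈ range N, Sum.elim (padBlocks x k) (padBlocks x (k + 1)) ⬝ᵥ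
        (fromBlocks (A k) (C k) (C k)ᵀ (B k) *ᵥ
          Sum.elim (padBlocks x k) (padBlocks x (k + 1))) := by
  rw [dotProduct_blockTriDiag_mulVec, sum_range_sumElim_dotProduct_fromBlocks_mulVec N A B C
    (padBlocks x) rfl (padBlocks_of_le x le_rfl)]

end BlockTriDiag

theorem blockTriDiag_posDef_general
    (N m : ℕ)
    (A B C : ℕ → Matrix (Fin m) (Fin m) ℝ)
    (hHk : ∀ k < N, (Matrix.fromBlocks (A k) (C k) (C k)ᵀ (B k)).PosSemidef)
    (hdef : (∀ k < N, (A k).PosDef) ∨ (∀ k < N, (B k).PosDef)) :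
    (blockTriDiag N m A B C).PosDef := by
  have hHerm (k) (hk : k < N) := isHermitian_fromBlocks_iff.1 (hHk k hk).isHermitian
  refine .of_dotProduct_mulVec_pos (blockTriDiag_isHermitian N m A B C
    (fun k hk => (hHerm k hk).1) fun k hk => (hHerm k hk).2.2.2) fun x hx => ?_
  have hq (k) (hk : k ∈ range N) : 0 ≤ Sum.elim (padBlocks x k) (padBlocks x (k + 1)) ⬝ᵥ
      (fromBlocks (A k) (C k) (C k)ᵀ (B k) *ᵥ
        Sum.elim (padBlocks x k) (padBlocks x (k + 1))) := by
    simpa using (hHk k (mem_range.1 hk)).dotProduct_mulVec_nonneg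
      (Sum.elim (padBlocks x k) (padBlocks x (k + 1)))
  rw [star_trivial, dotProduct_blockTriDiag_mulVec_eq_sum_fromBlocks]
  refine (sum_nonneg hq).lt_of_ne fun hsum => hx ?_
  have hv := forall_le_eq_zero_of_sumElim_dotProduct_fromBlocks_mulVec_eq_zero hdef rfl
    (padBlocks_of_le x le_rfl) fun k hk =>
      (sum_eq_zero_iff_of_nonneg hq).1 hsum.symm k (mem_range.2 hk)
  funext ⟨r, i⟩
  simpa [padBlocks_succ] using congrFun (hv (r + 1) (by omega)) i

theorem blockTriDiag_posDef
    (N m : ℕ) (hN : 2 ≤ N) (hm : 1 ≤ m)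
    (A B C : ℕ → Matrix (Fin m) (Fin m) ℝ)
    (hA : ∀ k < N, (A k).IsSymm) (hB : ∀ k < N, (B k).IsSymm)
    (hHk : ∀ k < N, (Matrix.fromBlocks (A k) (C k) (C k)ᵀ (B k)).PosSemidef)
    (hdef : (∀ k < N, (A k).PosDef) ∨ (∀ k < N, (B k).PosDef)) :
    (blockTriDiag N m A B C).PosDef :=
  blockTriDiag_posDef_general N m A B C hHk hdef
end

section
/- Let H be a real symmetric positive definite matrix indexed by pairs (k, i) with k ∈ {1, …, N−1} and i ∈ {1, …, m}, which is block tridiagonal, meaning H((k,i),(l,j)) = 0 whenever |k − l| ≥ 2. Let D be its block diagonal part, i.e. D((k,i),(l,j)) = H((k,i),(l,j)) if k = l and 0 otherwise, and let C = H − D. Then D is invertible and the spectral radius of the matrix J = −D⁻¹ C is strictly less than 1, i.e. every complex eigenvalue λ of J satisfies |λ| < 1. -/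
open Matrix Polynomial

private lemma jacobi_aux_eigen {n : Type*} [Fintype n] [DecidableEq n]
    (M : Matrix n n ℂ) (μ : ℂ) (h : M.charpoly.IsRoot μ) :
    ∃ v : n → ℂ, v ≠ 0 ∧ M *ᵥ v = μ • v := by
  have hmap : (charmatrix M).map (Polynomial.evalRingHom μ) = μ • 1 - M := by
    ext p q
    by_cases hpq : p = q
    · subst hpq; simp [charmatrix_apply_eq]
    · simp [charmatrix_apply_ne _ _ _ hpq, hpq]
  have hdet : (μ • (1 : Matrix n n ℂ) - M).det = 0 := by
    rw [← hmap]
    rw [show (charmatrix M).map ⇑(evalRingHom μ)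
        = (evalRingHom μ).mapMatrix (charmatrix M) from rfl, ← RingHom.map_det]
    exact h
  obtain ⟨v, hv0, hv⟩ := (Matrix.exists_mulVec_eq_zero_iff).mpr hdet
  refine ⟨v, hv0, ?_⟩
  rw [Matrix.sub_mulVec, Matrix.smul_mulVec, Matrix.one_mulVec, sub_eq_zero] at hv
  exact hv.symm

private lemma jacobi_aux_quad {n : Type*} [Fintype n] (A : Matrix n n ℝ)
    (hA : ∀ p q, A p q = A q p) (v : n → ℂ) :
    star v ⬝ᵥ (A.map Complex.ofReal) *ᵥ v =
      (((fun p => (v p).re) ⬝ᵥ A *ᵥ (fun p => (v p).re)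
        + (fun p => (v p).im) ⬝ᵥ A *ᵥ (fun p => (v p).im) : ℝ) : ℂ) := by
  have expand : star v ⬝ᵥ (A.map Complex.ofReal) *ᵥ v
      = ∑ p, ∑ q, star (v p) * ((A p q : ℂ) * v q) := by
    simp [dotProduct, mulVec, map_apply, Finset.mul_sum]
  rw [expand]
  apply Complex.ext
  · simp only [Complex.re_sum, Complex.mul_re, Complex.mul_im, Complex.ofReal_re,
      Complex.ofReal_im, RCLike.star_def, Complex.conj_re, Complex.conj_im,
      Complex.ofReal_re, dotProduct, mulVec, Finset.mul_sum]
    rw [← Finset.sum_add_distrib]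
    refine Finset.sum_congr rfl fun p _ => ?_
    rw [← Finset.sum_add_distrib]
    refine Finset.sum_congr rfl fun q _ => ?_
    ring
  · have key : (∑ p, ∑ q, star (v p) * ((A p q : ℂ) * v q)).im
        = ∑ p, ∑ q, ((v p).re * (A p q * (v q).im) - (v p).im * (A p q * (v q).re)) := by
      rw [Complex.im_sum]
      refine Finset.sum_congr rfl fun p _ => ?_
      rw [Complex.im_sum]
      refine Finset.sum_congr rfl fun q _ => ?_
      simp [Complex.mul_im, Complex.mul_re]
      ring
    rw [key, Complex.ofReal_im]
    have h2 : ∑ p, ∑ q, ((v p).im * (A p q * (v q).re))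
        = ∑ p, ∑ q, ((v p).re * (A p q * (v q).im)) := by
      rw [Finset.sum_comm]
      refine Finset.sum_congr rfl fun p _ => Finset.sum_congr rfl fun q _ => ?_
      rw [hA q p]; ring
    simp only [Finset.sum_sub_distrib]
    rw [sub_eq_zero]
    exact h2.symm

private lemma jacobi_aux_pairpos {n : Type*} [Fintype n] {A : Matrix n n ℝ}
    (hA : A.PosDef) {x y : n → ℝ} (hxy : x ≠ 0 ∨ y ≠ 0) :
    0 < x ⬝ᵥ A *ᵥ x + y ⬝ᵥ A *ᵥ y := by
  have hx' := hA.posSemidef.dotProduct_mulVec_nonneg x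
  have hy' := hA.posSemidef.dotProduct_mulVec_nonneg y
  rw [star_trivial] at hx' hy'
  rcases hxy with h | h
  · have := hA.dotProduct_mulVec_pos h; rw [star_trivial] at this; linarith
  · have := hA.dotProduct_mulVec_pos h; rw [star_trivial] at this; linarith

theorem spectral_radius_jacobi_lt_one
    (N m : ℕ) (hN : 2 ≤ N) (hm : 1 ≤ m)
    (H : Matrix (Fin (N - 1) × Fin m) (Fin (N - 1) × Fin m) ℝ)
    (hpd : H.PosDef)
    (htri : ∀ (k l : Fin (N - 1)) (i j : Fin m),
      ((k : ℕ) + 2 ≤ (l : ℕ) ∨ (l : ℕ) + 2 ≤ (k : ℕ)) → H (k, i) (l, j) = 0)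
    (D : Matrix (Fin (N - 1) × Fin m) (Fin (N - 1) × Fin m) ℝ)
    (hD : ∀ (k l : Fin (N - 1)) (i j : Fin m),
      D (k, i) (l, j) = if k = l then H (k, i) (l, j) else 0) :
    IsUnit D ∧
      ∀ μ : ℂ, (((-(D⁻¹ * (H - D))).map Complex.ofReal).charpoly).IsRoot μ →
        ‖μ‖ < 1 := by
  have hsym : ∀ p q, H p q = H q p := by
    intro p q
    conv_lhs => rw [← hpd.1]
    simp [conjTranspose_apply]
  have hD' : ∀ p q : Fin (N-1) × Fin m, D p q = if p.1 = q.1 then H p q else 0 := by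
    intro ⟨k,i⟩ ⟨l,j⟩; exact hD k l i j
  -- D is positive definite
  have hDpd : D.PosDef := by
    refine Matrix.PosDef.of_dotProduct_mulVec_pos ?_ ?_
    · ext p q
      simp only [conjTranspose_apply, star_trivial, hD' p q, hD' q p, hsym q p]
      rcases eq_or_ne p.1 q.1 with h | h
      · simp [h]
      · simp [h, Ne.symm h]
    · intro x hx
      rw [star_trivial]
      set e : Fin (N-1) → (Fin (N-1) × Fin m → ℝ) :=
        fun k p => if p.1 = k then x p else 0 with he
      have lhs_eq : x ⬝ᵥ D *ᵥ x
          = ∑ p, ∑ q, if p.1 = q.1 then x p * (H p q * x q) else 0 := by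
        simp only [dotProduct, mulVec, Finset.mul_sum]
        refine Finset.sum_congr rfl fun p _ => Finset.sum_congr rfl fun q _ => ?_
        rw [hD' p q]
        split <;> simp
      have rhs_eq : ∑ k, (e k) ⬝ᵥ H *ᵥ (e k)
          = ∑ p, ∑ q, if p.1 = q.1 then x p * (H p q * x q) else 0 := by
        simp only [dotProduct, mulVec, Finset.mul_sum]
        conv_lhs => rw [Finset.sum_comm]
        refine Finset.sum_congr rfl fun p _ => ?_
        conv_lhs => rw [Finset.sum_comm]
        refine Finset.sum_congr rfl fun q _ => ?_
        simp only [he]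
        rcases eq_or_ne p.1 q.1 with h | h
        · rw [if_pos h, Finset.sum_eq_single p.1]
          · simp [← h]
          · intro k _ hk
            have h1 : ¬ (p.1 = k) := fun hh => hk hh.symm
            simp [h1]
          · simp
        · rw [if_neg h]
          apply Finset.sum_eq_zero
          intro k _
          rcases eq_or_ne p.1 k with hk | hk
          · have : q.1 ≠ k := fun hh => h (hk.trans hh.symm)
            simp [this]
          · simp [hk]
      rw [lhs_eq, ← rhs_eq]
      obtain ⟨p0, hp0⟩ : ∃ p, x p ≠ 0 := Function.ne_iff.mp hx
      apply Finset.sum_pos'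
      · intro k _
        have := hpd.posSemidef.dotProduct_mulVec_nonneg (e k)
        rwa [star_trivial] at this
      · refine ⟨p0.1, Finset.mem_univ _, ?_⟩
        have hek : e p0.1 ≠ 0 := by
          intro hcon
          apply hp0
          have := congrFun hcon p0
          simpa [he] using this
        have := hpd.dotProduct_mulVec_pos hek
        rwa [star_trivial] at this
  -- 2D - H is positive definite
  have entry : ∀ p q : Fin (N-1) × Fin m,
      (2 • D - H) p q = (-1 : ℝ) ^ ((p.1 : ℕ) + (q.1 : ℕ)) * H p q := by
    intro p q
    simp only [Matrix.sub_apply, Matrix.smul_apply, smul_eq_mul, hD' p q]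
    rcases eq_or_ne p.1 q.1 with h | h
    · rw [if_pos h, h]
      have hev : Even ((q.1 : ℕ) + (q.1 : ℕ)) := ⟨(q.1 : ℕ), rfl⟩
      rw [hev.neg_one_pow]
      ring
    · rw [if_neg h]
      by_cases hfar : ((p.1 : ℕ) + 2 ≤ (q.1 : ℕ) ∨ (q.1 : ℕ) + 2 ≤ (p.1 : ℕ))
      · have h0 : H p q = 0 := htri p.1 q.1 p.2 q.2 hfar
        rw [h0]; ring
      · push_neg at hfar
        have hne : (p.1 : ℕ) ≠ (q.1 : ℕ) := fun hh => h (Fin.ext hh)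
        have hodd : Odd ((p.1 : ℕ) + (q.1 : ℕ)) := by
          rcases Nat.lt_or_ge (p.1 : ℕ) (q.1 : ℕ) with hlt | hge
          · have : (q.1 : ℕ) = (p.1 : ℕ) + 1 := by omega
            rw [this]; exact ⟨(p.1 : ℕ), by ring⟩
          · have : (p.1 : ℕ) = (q.1 : ℕ) + 1 := by omega
            rw [this]; exact ⟨(q.1 : ℕ), by ring⟩
        rw [Odd.neg_one_pow hodd]
        ring
  have hM2 : (2 • D - H).PosDef := by
    refine Matrix.PosDef.of_dotProduct_mulVec_pos ?_ ?_
    · ext p q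
      simp only [conjTranspose_apply, star_trivial, entry p q, entry q p, hsym q p]
      ring_nf
    · intro x hx
      rw [star_trivial]
      set s : Fin (N-1) × Fin m → ℝ := fun p => (-1) ^ ((p.1 : ℕ)) * x p with hs
      have hsne : s ≠ 0 := by
        intro hcon
        apply hx
        funext p
        have := congrFun hcon p
        simp only [hs, Pi.zero_apply] at this ⊢
        rcases mul_eq_zero.mp this with h1 | h1
        · exact absurd h1 (pow_ne_zero _ (by norm_num))
        · exact h1
      have key : x ⬝ᵥ (2 • D - H) *ᵥ x = s ⬝ᵥ H *ᵥ s := by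
        simp only [dotProduct, mulVec, Finset.mul_sum]
        refine Finset.sum_congr rfl fun p _ => Finset.sum_congr rfl fun q _ => ?_
        rw [entry p q, hs]
        simp only [pow_add]
        ring
      rw [key]
      have := hpd.dotProduct_mulVec_pos hsne
      rwa [star_trivial] at this
  have hunit : IsUnit D := hDpd.isUnit
  refine ⟨hunit, ?_⟩
  intro μ hroot
  obtain ⟨v, hv0, hv⟩ := jacobi_aux_eigen _ μ hroot
  -- algebraic identity D * J = D - H
  have hDJ : D * (-(D⁻¹ * (H - D))) = D - H := by
    have h1 : D * (D⁻¹ * (H - D)) = H - D := by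
      rw [← Matrix.mul_assoc, Matrix.mul_nonsing_inv D
        ((Matrix.isUnit_iff_isUnit_det D).mp hunit), Matrix.one_mul]
    rw [Matrix.mul_neg, h1, neg_sub]
  have hDJc : (D.map Complex.ofReal) * ((-(D⁻¹ * (H - D))).map Complex.ofReal)
      = ((D - H).map Complex.ofReal) := by
    have h1 : (D * (-(D⁻¹ * (H - D)))).map Complex.ofReal
        = (D.map Complex.ofReal) * ((-(D⁻¹ * (H - D))).map Complex.ofReal) := by
      ext p q
      simp only [map_apply, Matrix.mul_apply]
      push_cast
      rfl
    rw [← h1, hDJ]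
  have hHv : (H.map Complex.ofReal) *ᵥ v
      = (1 - μ) • ((D.map Complex.ofReal) *ᵥ v) := by
    have h1 : (D.map Complex.ofReal) *ᵥ ((-(D⁻¹ * (H - D))).map Complex.ofReal *ᵥ v)
        = ((D - H).map Complex.ofReal) *ᵥ v := by
      rw [Matrix.mulVec_mulVec, hDJc]
    rw [hv] at h1
    have h2 : (D - H).map Complex.ofReal
        = D.map Complex.ofReal - H.map Complex.ofReal := by
      ext p q; simp
    rw [h2, Matrix.sub_mulVec, Matrix.mulVec_smul] at h1
    rw [sub_smul, one_smul, h1]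
    abel
  set x : Fin (N-1) × Fin m → ℝ := fun p => (v p).re with hxdef
  set y : Fin (N-1) × Fin m → ℝ := fun p => (v p).im with hydef
  have hxy : x ≠ 0 ∨ y ≠ 0 := by
    by_contra hcon
    push_neg at hcon
    apply hv0
    funext p
    have h1 := congrFun hcon.1 p
    have h2 := congrFun hcon.2 p
    simp only [hxdef, hydef, Pi.zero_apply] at h1 h2
    exact Complex.ext h1 h2
  set hval : ℝ := x ⬝ᵥ H *ᵥ x + y ⬝ᵥ H *ᵥ y with hhval
  set dval : ℝ := x ⬝ᵥ D *ᵥ x + y ⬝ᵥ D *ᵥ y with hdval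
  have hsymD : ∀ p q, D p q = D q p := by
    intro p q
    conv_lhs => rw [← hDpd.1]
    simp [conjTranspose_apply]
  have hqH := jacobi_aux_quad H hsym v
  have hqD := jacobi_aux_quad D hsymD v
  rw [← hxdef, ← hydef] at hqH hqD
  have hc : (hval : ℂ) = (1 - μ) * (dval : ℂ) := by
    rw [hhval, hdval, ← hqH, ← hqD, hHv]
    simp [dotProduct_smul, smul_eq_mul]
  have hpos : 0 < hval := jacobi_aux_pairpos hpd hxy
  have dpos : 0 < dval := jacobi_aux_pairpos hDpd hxy
  -- quadratic form of 2D - H gives hval < 2 * dval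
  have expand2 : ∀ z : Fin (N-1) × Fin m → ℝ,
      z ⬝ᵥ (2 • D - H) *ᵥ z = 2 * (z ⬝ᵥ D *ᵥ z) - z ⬝ᵥ H *ᵥ z := by
    intro z
    have hterm : ∀ p q, z p * ((2 • D - H) p q * z q)
        = 2 * (z p * (D p q * z q)) - z p * (H p q * z q) := by
      intro p q
      simp only [Matrix.sub_apply, Matrix.smul_apply, smul_eq_mul]
      ring
    simp only [dotProduct, mulVec, Finset.mul_sum, hterm, Finset.sum_sub_distrib]
  have hlt2 : hval < 2 * dval := by
    have := jacobi_aux_pairpos hM2 hxy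
    rw [expand2 x, expand2 y] at this
    rw [hhval, hdval]
    linarith
  -- conclude
  have hd0 : (dval : ℂ) ≠ 0 := by
    exact_mod_cast dpos.ne'
  have hμ : μ = ((1 - hval / dval : ℝ) : ℂ) := by
    push_cast
    rw [hc, mul_div_assoc, div_self hd0]
    ring
  rw [hμ, Complex.norm_real, Real.norm_eq_abs, abs_lt]
  constructor
  · have : hval / dval < 2 := (div_lt_iff₀ dpos).mpr (by linarith)
    linarith
  · have : 0 < hval / dval := div_pos hpos dpos
    linarith
end

section
/- Fix an integer γ ≥ 1 and a real number h. With A(h) the γ×γ upper triangular matrix with entries a_{αβ}(h) = h^{β−α}/(β−α)! for α ≤ β and 0 otherwise, B(h) the γ×γ matrix with entries b_{αβ}(h) = h^{2γ−α−β−1}/(2γ−α−β−1)!, C(h) the γ×γ matrix with entries c_{αβ}(h) = h^{2γ−α−β−1}/((2γ−α−β−1)·(γ−α−1)!·(γ−β−1)!), and D the γ×γ diagonal matrix with entries d_{αα} = (−1)^{γ−α−1}, one has C(h) = A(h) · D · B(h). -/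
open Matrix Finset Nat

/-- The upper triangular matrix `A(h)` with entries `h^(β-α)/(β-α)!` for `α ≤ β`. -/
noncomputable def matA (γ : ℕ) (h : ℝ) : Matrix (Fin γ) (Fin γ) ℝ :=
  fun α β =>
    if (α : ℕ) ≤ (β : ℕ) then h ^ ((β : ℕ) - (α : ℕ)) / (((β : ℕ) - (α : ℕ)).factorial : ℝ)
    else 0

/-- The matrix `B(h)` with entries `h^(2γ-α-β-1)/(2γ-α-β-1)!`. -/
noncomputable def matB (γ : ℕ) (h : ℝ) : Matrix (Fin γ) (Fin γ) ℝ :=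
  fun α β =>
    h ^ (2 * γ - (α : ℕ) - (β : ℕ) - 1) / ((2 * γ - (α : ℕ) - (β : ℕ) - 1).factorial : ℝ)

/-- The matrix `C(h)` with entries `h^(2γ-α-β-1)/((2γ-α-β-1)·(γ-α-1)!·(γ-β-1)!)`. -/
noncomputable def matC (γ : ℕ) (h : ℝ) : Matrix (Fin γ) (Fin γ) ℝ :=
  fun α β =>
    h ^ (2 * γ - (α : ℕ) - (β : ℕ) - 1) /
      (((2 * γ - (α : ℕ) - (β : ℕ) - 1) * (γ - (α : ℕ) - 1).factorial *
          (γ - (β : ℕ) - 1).factorial : ℕ) : ℝ)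

/-- The diagonal matrix `D` with entries `(-1)^(γ-α-1)`. -/
noncomputable def matD (γ : ℕ) : Matrix (Fin γ) (Fin γ) ℝ :=
  Matrix.diagonal fun α : Fin γ => (-1 : ℝ) ^ (γ - (α : ℕ) - 1)

/-- The lower triangular matrix `L(h)` from the LU decomposition of `C(h)`. -/
noncomputable def matL (γ : ℕ) (h : ℝ) : Matrix (Fin γ) (Fin γ) ℝ :=
  fun α β =>
    if (β : ℕ) ≤ (α : ℕ) then
      h ^ ((β : ℤ) - (α : ℤ)) *
        (((α : ℕ).factorial * (2 * γ - (β : ℕ) - 1).factorial * (γ - (β : ℕ) - 1).factorial *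
            (2 * γ - (α : ℕ) - (β : ℕ) - 2).factorial : ℕ) : ℝ) /
        (((β : ℕ).factorial * ((α : ℕ) - (β : ℕ)).factorial * (2 * γ - (α : ℕ) - 1).factorial *
            (γ - (α : ℕ) - 1).factorial * (2 * γ - 2 * (β : ℕ) - 2).factorial : ℕ) : ℝ)
    else 0

/-- The upper triangular matrix `U(h)` from the LU decomposition of `C(h)`. -/
noncomputable def matU (γ : ℕ) (h : ℝ) : Matrix (Fin γ) (Fin γ) ℝ :=
  fun α β =>
    if (α : ℕ) ≤ (β : ℕ) then
      h ^ (2 * γ - (α : ℕ) - (β : ℕ) - 1) *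
        (((α : ℕ).factorial * (β : ℕ).factorial * (2 * γ - 2 * (α : ℕ) - 1).factorial *
            (2 * γ - (α : ℕ) - (β : ℕ) - 2).factorial : ℕ) : ℝ) /
        ((((β : ℕ) - (α : ℕ)).factorial * (2 * γ - (α : ℕ) - 1).factorial *
            (2 * γ - (β : ℕ) - 1).factorial * (γ - (α : ℕ) - 1).factorial *
            (γ - (β : ℕ) - 1).factorial : ℕ) : ℝ)
    else 0

/-- The diagonal matrix `D̂(h)` of diagonal entries of `U(h)`. -/
noncomputable def matDhat (γ : ℕ) (h : ℝ) : Matrix (Fin γ) (Fin γ) ℝ :=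
  Matrix.diagonal fun α : Fin γ =>
    h ^ (2 * γ - 2 * (α : ℕ) - 1) *
      (((α : ℕ).factorial ^ 2 * (2 * γ - 2 * (α : ℕ) - 2).factorial *
          (2 * γ - 2 * (α : ℕ) - 1).factorial : ℕ) : ℝ) /
      ((((γ - (α : ℕ) - 1).factorial) ^ 2 * ((2 * γ - (α : ℕ) - 1).factorial) ^ 2 : ℕ) : ℝ)

/-! Write `N = 2γ - α - β - 1` and `m = γ - α - 1`. Since `A` is upper triangular, the
`(α, β)` entry of `A D B` is
`h ^ N * ∑_{j ≤ m} (-1)^(m-j) / (j! (N-j)!) = h ^ N / N! * ∑_{j ≤ m} (-1)^(m-j) C(N, j)`, and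
the partial alternating sum of binomial coefficients equals `C(N - 1, m)` by Pascal's rule,
which gives `h ^ N / (N m! (N - m - 1)!)` with `N - m - 1 = γ - β - 1`. -/

theorem neg_one_pow_sub_eq_mul {R : Type*} [Monoid R] [HasDistribNeg R] {m j : ℕ} (hj : j ≤ m) :
    (-1 : R) ^ (m - j) = (-1) ^ m * (-1) ^ j := by
  conv_rhs => rw [← Nat.sub_add_cancel hj, pow_add, mul_assoc, ← pow_add, ← two_mul, pow_mul]
  simp

theorem sum_range_neg_one_pow_mul_choose_succ {R : Type*} [Ring R] (n m : ℕ) :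
    ∑ j ∈ range (m + 1), (-1 : R) ^ (m - j) * (n + 1).choose j = n.choose m := by
  have h := congrArg (fun z : ℤ => (-1 : R) ^ m * z)
    (Int.alternating_sum_range_choose_eq_choose (n := n) (m := m))
  simp only [Int.cast_sum, Int.cast_mul, Int.cast_pow, Int.cast_neg, Int.cast_one,
    Int.cast_natCast, mul_sum, ← mul_assoc, ← pow_add, ← two_mul, pow_mul, neg_one_sq,
    one_pow, one_mul] at h
  rw [← h]
  refine sum_congr rfl fun j hj => ?_
  rw [neg_one_pow_sub_eq_mul (Nat.lt_succ_iff.mp (mem_range.mp hj)), pow_add]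

theorem sum_range_neg_one_pow_div_factorial_mul_factorial {N m : ℕ} (hm : m < N) :
    ∑ j ∈ range (m + 1), (-1 : ℝ) ^ (m - j) / (j ! * (N - j)!) =
      1 / (N * m ! * (N - m - 1)!) := by
  obtain ⟨n, rfl⟩ : ∃ n, N = n + 1 := ⟨N - 1, by omega⟩
  have hterm : ∀ j ∈ range (m + 1), (-1 : ℝ) ^ (m - j) / (j ! * (n + 1 - j)!) =
      (-1 : ℝ) ^ (m - j) * (n + 1).choose j / (n + 1)! := by
    intro j hj
    rw [Nat.cast_choose ℝ (by grind)]
    field_simp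
  rw [sum_congr rfl hterm, ← sum_div, sum_range_neg_one_pow_mul_choose_succ,
    Nat.cast_choose ℝ (by omega), Nat.factorial_succ, show n + 1 - m - 1 = n - m by omega]
  push_cast
  field_simp

theorem matA_mul_matD_mul_matB_apply (γ : ℕ) (h : ℝ) (α β : Fin γ) :
    (matA γ h * matD γ * matB γ h) α β =
      h ^ (2 * γ - α - β - 1) * ∑ j ∈ range (γ - α - 1 + 1),
        (-1 : ℝ) ^ (γ - α - 1 - j) / (j ! * (2 * γ - α - β - 1 - j)!) := by
  rw [Matrix.mul_assoc, Matrix.mul_apply, sum_fin_eq_sum_range,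
    ← sum_range_add_sum_Ico _ α.is_le',
    sum_Ico_eq_sum_range, sum_eq_zero, zero_add,
    show range (γ - α) = range (γ - α - 1 + 1) by grind, mul_sum]
  · refine sum_congr rfl fun j hj_mem => ?_
    have hj : j < γ - α := by grind
    simp only [matA, matD, matB, diagonal_mul, dif_pos (show α + j < γ by omega),
      le_add_iff_nonneg_right, zero_le, if_true, Nat.add_sub_cancel_left]
    rw [show γ - (α + j) - 1 = γ - α - 1 - j by omega,
      show 2 * γ - (α + j) - β - 1 = 2 * γ - α - β - 1 - j by omega,
      ← Nat.sub_add_cancel (show j ≤ 2 * γ - α - β - 1 by omega), pow_add,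
      Nat.add_sub_cancel]
    field_simp
  · intro k hk_mem
    have hk : k < α := by grind
    simp [matA, hk.trans α.is_lt, hk.not_ge]

theorem matC_eq_matA_matD_matB_general (γ : ℕ) (h : ℝ) :
    matC γ h = matA γ h * matD γ * matB γ h := by
  ext α β
  rw [matA_mul_matD_mul_matB_apply,
    sum_range_neg_one_pow_div_factorial_mul_factorial
      (by omega : γ - α - 1 < 2 * γ - α - β - 1),
    show 2 * γ - α - β - 1 - (γ - α - 1) - 1 = γ - β - 1 by omega, matC]
  push_cast
  ring

theorem matC_eq_matA_matD_matB (γ : ℕ) (hγ : 1 ≤ γ) (h : ℝ) :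
    matC γ h = matA γ h * matD γ * matB γ h :=
  matC_eq_matA_matD_matB_general γ h
end

section
/- Fix an integer γ ≥ 1 and a nonzero real number h. Let C(h) be the γ×γ matrix with entries c_{αβ}(h) = h^{2γ−α−β−1}/((2γ−α−β−1)·(γ−α−1)!·(γ−β−1)!) for 0 ≤ α, β ≤ γ−1. Let L(h) be the γ×γ lower triangular matrix with entries l_{αβ}(h) = h^{β−α} · α! · (2γ−β−1)! · (γ−β−1)! · (2γ−α−β−2)! / (β! · (α−β)! · (2γ−α−1)! · (γ−α−1)! · (2γ−2β−2)!) for 0 ≤ β ≤ α ≤ γ−1 and 0 otherwise, and let U(h) be the γ×γ upper triangular matrix with entries u_{αβ}(h) = h^{2γ−α−β−1} · α! · β! · (2γ−2α−1)! · (2γ−α−β−2)! / ((β−α)! · (2γ−α−1)! · (2γ−β−1)! · (γ−α−1)! · (γ−β−1)!) for 0 ≤ α ≤ β ≤ γ−1 and 0 otherwise. Then C(h) = L(h) · U(h). -/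
open Matrix Finset Nat

/-! The entry `(α, β)` of `L(h) U(h)` is a sum over `k ≤ min α β` of terms sharing the factor
`luScale`; the rest, `(2γ-2k-1)(2γ-α-k-2)!(2γ-β-k-2)!/((α-k)!(β-k)!)`, equals `T k - T (k+1)` for
`T k = (2γ-α-k-1)!(2γ-β-k-1)!/((2γ-α-β-1)(α-k)!(β-k)!)`, because
`(2γ-2k-1)(2γ-α-β-1) = (2γ-α-k-1)(2γ-β-k-1) - (α-k)(β-k)`.
The sum telescopes to `T 0`, and `luScale · T 0` is the entry of `C(h)`. -/

theorem sum_range_ite_le {M : Type*} [AddCommMonoid M] {n m : ℕ} (hmn : m < n) (f : ℕ → M) :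
    ∑ k ∈ range n, (if k ≤ m then f k else 0) = ∑ k ∈ range (m + 1), f k := by
  rw [← sum_filter]
  congr 1
  ext k
  simp only [mem_filter, mem_range]
  omega

theorem natCast_factorial_of_eq_succ {m n : ℕ} (h : m = n + 1) : (m ! : ℝ) = m * n ! := by
  subst h
  push_cast [Nat.factorial_succ]
  ring

noncomputable def luSummand (γ a b k : ℕ) : ℝ :=
  ((2 * γ - 2 * k - 1 : ℕ) : ℝ) * (2 * γ - a - k - 2)! * (2 * γ - b - k - 2)! /
    ((a - k)! * (b - k)!)

noncomputable def luTail (γ a b k : ℕ) : ℝ :=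
  (2 * γ - a - k - 1)! * (2 * γ - b - k - 1)! /
    (((2 * γ - a - b - 1 : ℕ) : ℝ) * (a - k)! * (b - k)!)

noncomputable def luScale (γ : ℕ) (h : ℝ) (a b : ℕ) : ℝ :=
  h ^ (2 * γ - a - b - 1) * (a ! * b !) /
    ((2 * γ - a - 1)! * (γ - a - 1)! * (2 * γ - b - 1)! * (γ - b - 1)!)

section Telescoping

variable {γ a b k : ℕ}

theorem lu_weight_identity (ha : a < γ) (hb : b < γ) (hka : k ≤ a) (hkb : k ≤ b) :
    ((2 * γ - 2 * k - 1 : ℕ) : ℝ) * ((2 * γ - a - b - 1 : ℕ) : ℝ) =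
      ((2 * γ - a - k - 1 : ℕ) : ℝ) * ((2 * γ - b - k - 1 : ℕ) : ℝ) -
        ((a - k : ℕ) : ℝ) * ((b - k : ℕ) : ℝ) := by
  simp (disch := omega) only [Nat.cast_sub, Nat.cast_mul, Nat.cast_ofNat, Nat.cast_one]
  ring

theorem luSummand_eq_luTail_sub (ha : a < γ) (hb : b < γ) (hka : k < a) (hkb : k < b) :
    luSummand γ a b k = luTail γ a b k - luTail γ a b (k + 1) := by
  have hd : ((2 * γ - a - b - 1 : ℕ) : ℝ) ≠ 0 := by norm_cast; omega
  have hak : ((a - k : ℕ) : ℝ) ≠ 0 := by norm_cast; omega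
  have hbk : ((b - k : ℕ) : ℝ) ≠ 0 := by norm_cast; omega
  unfold luSummand luTail
  rw [natCast_factorial_of_eq_succ (m := 2 * γ - a - k - 1) (n := 2 * γ - a - k - 2) (by omega),
    natCast_factorial_of_eq_succ (m := 2 * γ - b - k - 1) (n := 2 * γ - b - k - 2) (by omega),
    natCast_factorial_of_eq_succ (m := a - k) (n := a - (k + 1)) (by omega),
    natCast_factorial_of_eq_succ (m := b - k) (n := b - (k + 1)) (by omega),
    show 2 * γ - a - (k + 1) - 1 = 2 * γ - a - k - 2 by omega,
    show 2 * γ - b - (k + 1) - 1 = 2 * γ - b - k - 2 by omega]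
  field_simp
  linear_combination lu_weight_identity ha hb hka.le hkb.le

-- Truncated subtraction keeps `luTail γ a b (min a b + 1)` nonzero, so the last term is matched
-- with `luTail` directly: the correction `(a-k)(b-k)` of the weight identity vanishes there.
theorem luSummand_min_eq_luTail (ha : a < γ) (hb : b < γ) :
    luSummand γ a b (min a b) = luTail γ a b (min a b) := by
  have hd : ((2 * γ - a - b - 1 : ℕ) : ℝ) ≠ 0 := by norm_cast; omega
  have hvanish : ((a - min a b : ℕ) : ℝ) * ((b - min a b : ℕ) : ℝ) = 0 := by
    norm_cast
    rcases le_total a b with hab | hab <;> simp [hab]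
  unfold luSummand luTail
  rw [natCast_factorial_of_eq_succ (m := 2 * γ - a - min a b - 1)
      (n := 2 * γ - a - min a b - 2) (by omega),
    natCast_factorial_of_eq_succ (m := 2 * γ - b - min a b - 1)
      (n := 2 * γ - b - min a b - 2) (by omega)]
  field_simp
  linear_combination lu_weight_identity ha hb (min_le_left a b) (min_le_right a b) - hvanish

theorem sum_luSummand (ha : a < γ) (hb : b < γ) :
    ∑ k ∈ range (min a b + 1), luSummand γ a b k = luTail γ a b 0 := by
  have hsteps : ∀ k ∈ range (min a b), luSummand γ a b k = luTail γ a b k - luTail γ a b (k + 1) :=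
    fun k hk => by
      have := mem_range.mp hk
      exact luSummand_eq_luTail_sub ha hb (by omega) (by omega)
  rw [sum_range_succ, sum_congr rfl hsteps, sum_range_sub', luSummand_min_eq_luTail ha hb,
    sub_add_cancel]

end Telescoping

theorem matL_mul_matU_apply_term (γ : ℕ) (h : ℝ) (α β k : Fin γ) :
    matL γ h α k * matU γ h k β =
      if (k : ℕ) ≤ min (α : ℕ) β then luScale γ h α β * luSummand γ α β k else 0 := by
  have hα := α.isLt
  have hβ := β.isLt
  by_cases hkα : (k : ℕ) ≤ α
  · by_cases hkβ : (k : ℕ) ≤ β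
    · have hpow : h ^ ((k : ℤ) - α) * h ^ (2 * γ - k - β - 1) = h ^ (2 * γ - (α : ℕ) - β - 1) := by
        rw [← zpow_natCast, ← zpow_natCast, ← zpow_add' (by right; left; omega)]
        congr 1
        omega
      rw [matL, matU, if_pos hkα, if_pos hkβ, if_pos (le_min hkα hkβ), luScale, luSummand,
        ← hpow, show 2 * γ - (k : ℕ) - β - 2 = 2 * γ - β - k - 2 by omega]
      push_cast
      rw [natCast_factorial_of_eq_succ (m := 2 * γ - 2 * k - 1) (n := 2 * γ - 2 * k - 2)
        (by omega)]
      field_simp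
    · rw [matU, if_neg hkβ, mul_zero, if_neg (by omega)]
  · rw [matL, if_neg hkα, zero_mul, if_neg (by omega)]

theorem matC_apply_eq_luScale_mul_luTail (γ : ℕ) (h : ℝ) (α β : Fin γ) :
    matC γ h α β = luScale γ h α β * luTail γ α β 0 := by
  have hα := α.isLt
  have hβ := β.isLt
  have hd : ((2 * γ - (α : ℕ) - β - 1 : ℕ) : ℝ) ≠ 0 := by norm_cast; omega
  rw [matC, luScale, luTail]
  simp only [Nat.sub_zero]
  push_cast
  field_simp

theorem matC_eq_matL_mul_matU_general (γ : ℕ) (h : ℝ) :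
    matC γ h = matL γ h * matU γ h := by
  ext α β
  have hmin : min (α : ℕ) β < γ := lt_of_le_of_lt (min_le_left _ _) α.isLt
  rw [mul_apply, matC_apply_eq_luScale_mul_luTail, ← sum_luSummand α.isLt β.isLt, mul_sum,
    ← sum_range_ite_le hmin]
  simp_rw [matL_mul_matU_apply_term]
  exact (Fin.sum_univ_eq_sum_range _ γ).symm

theorem matC_eq_matL_mul_matU (γ : ℕ) (hγ : 1 ≤ γ) (h : ℝ) (hh : h ≠ 0) :
    matC γ h = matL γ h * matU γ h :=
  matC_eq_matL_mul_matU_general γ h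
end

section
/- Fix an integer γ ≥ 1 and a real number h. Let C(h) be the γ×γ matrix with entries c_{αβ}(h) = h^{2γ−α−β−1}/((2γ−α−β−1)·(γ−α−1)!·(γ−β−1)!) for 0 ≤ α, β ≤ γ−1. Then det C(h) = h^{γ²} · Π_{α=0}^{γ−1} (α! / (γ+α)!). In particular C(h) is invertible for every h ≠ 0. -/
open Matrix Finset Nat

/-!
Reversing the order of rows and columns turns `C(h)` into `D (h • H) D`, where
`D = diag (h^a / a!)` and `H = (1 / (a + b + 1))` is the Hilbert matrix. The Hilbert matrix is the
Cauchy matrix `(1 / (x a + y b))` with `x a = a`, `y b = b + 1`, so Cauchy's determinant formula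
gives `det H = (∏ a!)^3 / ∏ (γ + a)!`. Cauchy's formula itself follows by induction: one step of
Gaussian elimination on a Cauchy matrix leaves a Schur complement that is again a Cauchy matrix,
scaled by diagonal matrices on both sides.
-/

section Vandermonde

variable {R : Type*} [CommRing R]

theorem det_vandermonde_succ {n : ℕ} (x : Fin (n + 1) → R) :
    (vandermonde x).det = (∏ j : Fin n, (x j.succ - x 0)) * (vandermonde (Fin.tail x)).det := by
  simp only [det_vandermonde, Fin.prod_univ_succ, Fin.prod_Ioi_zero, Fin.prod_Ioi_succ]
  rfl

theorem det_vandermonde_natCast (n : ℕ) :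
    (vandermonde fun i : Fin n => (i : R)).det = ∏ i ∈ range n, (i ! : R) := by
  cases n with
  | zero => simp
  | succ n =>
    rw [det_vandermonde_id_eq_superFactorial, ← prod_range_succ_factorial]
    push_cast
    rfl

end Vandermonde

section Cauchy

variable {K : Type*} [Field K]

theorem det_succ_eq_mul_det_schur {n : ℕ} (M : Matrix (Fin (n + 1)) (Fin (n + 1)) K)
    (h0 : M 0 0 ≠ 0) :
    M.det = M 0 0 *
      (of fun i j : Fin n => M i.succ j.succ - M i.succ 0 * M 0 j.succ / M 0 0).det := by
  let c : Fin (n + 1) → K := Fin.cons 0 fun i => M i.succ 0 / M 0 0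
  let B : Matrix (Fin (n + 1)) (Fin (n + 1)) K := of fun i j => M i j - c i * M 0 j
  have hB : M.det = B.det :=
    det_eq_of_forall_row_eq_smul_add_const c 0 rfl fun i j => by simp [B, c]
  have hcol : ∀ i : Fin n, B i.succ 0 = 0 := fun i => by simp [B, c, div_mul_cancel₀ _ h0]
  have hpivot : B 0 0 = M 0 0 := by simp [B, c]
  have hschur : B.submatrix Fin.succ Fin.succ =
      of fun i j => M i.succ j.succ - M i.succ 0 * M 0 j.succ / M 0 0 := by
    ext i j
    simp [B, c, div_mul_eq_mul_div]
  rw [hB, det_succ_column_zero, Fin.sum_univ_succ]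
  simp [hcol, hpivot, hschur]

def cauchyMatrix {n : ℕ} (x y : Fin n → K) : Matrix (Fin n) (Fin n) K :=
  of fun i j => (x i + y j)⁻¹

theorem schur_cauchyMatrix {n : ℕ} (x y : Fin (n + 1) → K) (hxy : ∀ i j, x i + y j ≠ 0) :
    (of fun i j : Fin n => cauchyMatrix x y i.succ j.succ -
        cauchyMatrix x y i.succ 0 * cauchyMatrix x y 0 j.succ / cauchyMatrix x y 0 0) =
      diagonal (fun i => (x i.succ - x 0) / (x i.succ + y 0)) *
        cauchyMatrix (Fin.tail x) (Fin.tail y) *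
        diagonal (fun j => (y j.succ - y 0) / (x 0 + y j.succ)) := by
  ext i j
  have h₀₀ := hxy 0 0
  have h₀ⱼ := hxy 0 j.succ
  have hᵢ₀ := hxy i.succ 0
  have hᵢⱼ := hxy i.succ j.succ
  simp only [cauchyMatrix, of_apply, Fin.tail, mul_diagonal, diagonal_mul]
  field_simp
  ring

theorem det_cauchyMatrix_mul_prod {n : ℕ} (x y : Fin n → K) (hxy : ∀ i j, x i + y j ≠ 0) :
    (cauchyMatrix x y).det * ∏ i, ∏ j, (x i + y j) =
      (vandermonde x).det * (vandermonde y).det := by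
  induction n with
  | zero => simp
  | succ n ih =>
    have h₀₀ := hxy 0 0
    have hcol : ∏ i : Fin n, (x i.succ + y 0) ≠ 0 := prod_ne_zero_iff.mpr fun _ _ => hxy _ _
    have hrow : ∏ j : Fin n, (x 0 + y j.succ) ≠ 0 := prod_ne_zero_iff.mpr fun _ _ => hxy _ _
    rw [det_succ_eq_mul_det_schur _ (by simpa [cauchyMatrix] using h₀₀),
      schur_cauchyMatrix x y hxy, det_mul, det_mul, det_diagonal, det_diagonal,
      det_vandermonde_succ x, det_vandermonde_succ y, mul_mul_mul_comm _ (vandermonde _).det,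
      ← ih (Fin.tail x) (Fin.tail y) fun _ _ => hxy _ _, Fin.prod_univ_succ]
    simp only [Fin.prod_univ_succ (fun j => x _ + y j), prod_mul_distrib, prod_div_distrib,
      cauchyMatrix, of_apply, Fin.tail]
    field_simp

end Cauchy

def hilbertMatrix (K : Type*) [Field K] (n : ℕ) : Matrix (Fin n) (Fin n) K :=
  cauchyMatrix (fun i => (i : K)) (fun j => (j : K) + 1)

section Hilbert

variable {K : Type*} [Field K] [CharZero K]

theorem prod_range_natCast_add_succ (m n : ℕ) :
    ∏ j ∈ range n, ((m : K) + (j + 1)) = (m + n)! / m ! := by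
  rw [eq_div_iff (Nat.cast_ne_zero.mpr m.factorial_ne_zero), ← factorial_mul_ascFactorial,
    ascFactorial_eq_prod_range]
  push_cast
  rw [mul_comm]
  exact congrArg _ (prod_congr rfl fun j _ => by ring)

theorem prod_prod_natCast_add_succ (n : ℕ) :
    ∏ i : Fin n, ∏ j : Fin n, ((i : K) + (j + 1)) = ∏ i ∈ range n, ((n + i)! / i ! : K) := by
  rw [Fin.prod_univ_eq_prod_range (fun i => ∏ j : Fin n, ((i : K) + (j + 1)))]
  refine prod_congr rfl fun i _ => ?_
  rw [Fin.prod_univ_eq_prod_range (fun j => (i : K) + (j + 1)), prod_range_natCast_add_succ,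
    add_comm]

theorem det_hilbertMatrix (n : ℕ) :
    (hilbertMatrix K n).det =
      (∏ i ∈ range n, (i ! : K)) ^ 3 / ∏ i ∈ range n, ((n + i)! : K) := by
  have h := det_cauchyMatrix_mul_prod (fun i : Fin n => (i : K)) (fun j => (j : K) + 1)
    fun i j => by exact_mod_cast (by omega : (i : ℕ) + ((j : ℕ) + 1) ≠ 0)
  rw [det_vandermonde_add, det_vandermonde_natCast, prod_prod_natCast_add_succ,
    prod_div_distrib] at h
  have hF : ∏ i ∈ range n, (i ! : K) ≠ 0 :=
    prod_ne_zero_iff.mpr fun _ _ => Nat.cast_ne_zero.mpr (factorial_ne_zero _)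
  have hG : ∏ i ∈ range n, ((n + i)! : K) ≠ 0 :=
    prod_ne_zero_iff.mpr fun _ _ => Nat.cast_ne_zero.mpr (factorial_ne_zero _)
  field_simp at h
  rw [eq_div_iff hG, hilbertMatrix, h]

end Hilbert

theorem prod_range_pow_sq_mul_pow {M : Type*} [CommMonoid M] (x : M) (n : ℕ) :
    (∏ a ∈ range n, x ^ a) ^ 2 * x ^ n = x ^ (n ^ 2) := by
  rw [prod_pow_eq_pow_sum, ← pow_mul, ← pow_add, sum_range_id_mul_two]
  congr 1
  cases n <;> simp
  ring

theorem matC_eq_submatrix_revPerm (γ : ℕ) (h : ℝ) :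
    matC γ h = (diagonal (fun a : Fin γ => h ^ (a : ℕ) / (a : ℕ)!) * (h • hilbertMatrix ℝ γ) *
      diagonal (fun a : Fin γ => h ^ (a : ℕ) / (a : ℕ)!)).submatrix Fin.revPerm Fin.revPerm := by
  ext α β
  simp only [matC, submatrix_apply, mul_diagonal, diagonal_mul, Matrix.smul_apply, hilbertMatrix,
    cauchyMatrix, of_apply, Fin.revPerm_apply, Fin.val_rev, smul_eq_mul]
  have hα := α.isLt
  have hβ := β.isLt
  rw [show 2 * γ - α - β - 1 = (γ - (α + 1)) + (γ - (β + 1)) + 1 by omega,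
    show γ - α - 1 = γ - (α + 1) by omega, show γ - β - 1 = γ - (β + 1) by omega]
  push_cast
  field_simp
  ring

theorem det_matC_general (γ : ℕ) (h : ℝ) :
    (matC γ h).det = h ^ (γ ^ 2) * ∏ α ∈ Finset.range γ,
        ((α.factorial : ℝ) / ((γ + α).factorial : ℝ)) ∧
    (h ≠ 0 → IsUnit (matC γ h)) := by
  have hdet : (matC γ h).det = h ^ (γ ^ 2) * ∏ α ∈ range γ, ((α ! : ℝ) / (γ + α)!) := by
    rw [matC_eq_submatrix_revPerm, det_submatrix_equiv_self, det_mul, det_mul, det_smul,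
      det_diagonal, det_hilbertMatrix, Fintype.card_fin,
      Fin.prod_univ_eq_prod_range (fun a => h ^ a / (a ! : ℝ)), prod_div_distrib,
      prod_div_distrib, ← prod_range_pow_sq_mul_pow h γ]
    field_simp
  refine ⟨hdet, fun hh => ?_⟩
  rw [isUnit_iff_isUnit_det, hdet, isUnit_iff_ne_zero]
  positivity

theorem det_matC (γ : ℕ) (hγ : 1 ≤ γ) (h : ℝ) :
    (matC γ h).det = h ^ (γ ^ 2) * ∏ α ∈ Finset.range γ,
        ((α.factorial : ℝ) / ((γ + α).factorial : ℝ)) ∧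
    (h ≠ 0 → IsUnit (matC γ h)) :=
  det_matC_general γ h
end

section
/- Fix an integer γ ≥ 1 and a nonzero real number h. Let C(h) be the γ×γ matrix with entries c_{αβ}(h) = h^{2γ−α−β−1}/((2γ−α−β−1)·(γ−α−1)!·(γ−β−1)!), let L(h) be the γ×γ lower triangular matrix with entries l_{αβ}(h) = h^{β−α} · α! · (2γ−β−1)! · (γ−β−1)! · (2γ−α−β−2)! / (β! · (α−β)! · (2γ−α−1)! · (γ−α−1)! · (2γ−2β−2)!) for β ≤ α and 0 otherwise, and let D̂(h) be the γ×γ diagonal matrix with diagonal entries d̂_{αα}(h) = h^{2γ−2α−1} · (α!)² · (2γ−2α−2)! · (2γ−2α−1)! / (((γ−α−1)!)² · ((2γ−α−1)!)²). Then C(h) = L(h) · D̂(h) · L(h)ᵀ. -/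
open Matrix Finset Nat

/-!
Write `L(h)_{αk} = h^(k-α) · α^(k) (2γ-α-k-2)! / ((2γ-α-1)! (γ-α-1)!) · w_k` with the falling
factorial `α^(k)` and `w_k = (2γ-k-1)! (γ-k-1)! / (k! (2γ-2k-2)!)`. Since
`d̂_kk = h^(2γ-2k-1) (2γ-2k-1) / w_k²`, the `w_k` cancel in `(L D̂ Lᵀ)_{αβ}`, which becomes
`h^(2γ-α-β-1) / ((2γ-α-1)! (γ-α-1)! (2γ-β-1)! (γ-β-1)!)` times
`∑_k α^(k) β^(k) (2γ-2k-1) (2γ-α-k-2)! (2γ-β-k-2)!`.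
With `N = 2γ-1` this sum telescopes: `R_k = α^(k) β^(k) (N-β-k)! (N-α-k)!` vanishes for `k > α`
and `R_k - R_(k+1)` is `N-α-β` times the `k`-th term, because
`(N-α-k)(N-β-k) - (α-k)(β-k) = (N-α-β)(N-2k)`. So the sum is `(N-α)! (N-β)! / (N-α-β)`, and the
entry is `c_{αβ}(h)`.
-/

theorem descFactorial_mul_factorial_telescope {N a b : ℕ} (hab : a + b < N) (k : ℕ) :
    a.descFactorial k * b.descFactorial k * (N - b - k)! * (N - a - k)! =
      a.descFactorial (k + 1) * b.descFactorial (k + 1) * (N - b - (k + 1))! * (N - a - (k + 1))! +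
        (N - a - b) * (a.descFactorial k * b.descFactorial k * (N - 2 * k) *
          (N - b - k - 1)! * (N - a - k - 1)!) := by
  rcases lt_or_ge a k with hak | hka
  · simp [descFactorial_of_lt hak]
  rcases lt_or_ge b k with hbk | hkb
  · simp [descFactorial_of_lt hbk]
  obtain ⟨x, rfl⟩ : ∃ x, a = k + x := ⟨a - k, by omega⟩
  obtain ⟨y, rfl⟩ : ∃ y, b = k + y := ⟨b - k, by omega⟩
  obtain ⟨c, rfl⟩ : ∃ c, N = 2 * k + x + y + c + 1 := ⟨N - (2 * k + x + y) - 1, by omega⟩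
  rw [descFactorial_succ, descFactorial_succ,
    show 2 * k + x + y + c + 1 - (k + y) - k - 1 = x + c by omega,
    show 2 * k + x + y + c + 1 - (k + x) - k - 1 = y + c by omega,
    show 2 * k + x + y + c + 1 - (k + y) - k = (x + c) + 1 by omega,
    show 2 * k + x + y + c + 1 - (k + x) - k = (y + c) + 1 by omega,
    show 2 * k + x + y + c + 1 - (k + y) - (k + 1) = x + c by omega,
    show 2 * k + x + y + c + 1 - (k + x) - (k + 1) = y + c by omega,
    show 2 * k + x + y + c + 1 - (k + x) - (k + y) = c + 1 by omega,
    show 2 * k + x + y + c + 1 - 2 * k = x + y + c + 1 by omega,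
    add_tsub_cancel_left, add_tsub_cancel_left, factorial_succ, factorial_succ]
  ring

theorem sum_range_descFactorial_mul_factorial {N a b n : ℕ} (hab : a + b < N) (han : a < n) :
    (N - a - b) * ∑ k ∈ range n, a.descFactorial k * b.descFactorial k * (N - 2 * k) *
        (N - b - k - 1)! * (N - a - k - 1)! = (N - b)! * (N - a)! := by
  set R : ℕ → ℤ := fun k ↦ a.descFactorial k * b.descFactorial k * (N - b - k)! * (N - a - k)!
  have hR : R n = 0 := by simp [R, descFactorial_of_lt han]
  zify
  rw [mul_sum]
  calc _ = ∑ k ∈ range n, (R k - R (k + 1)) := by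
        refine sum_congr rfl fun k _ ↦ ?_
        rw [eq_sub_iff_add_eq']
        simp only [R]
        exact_mod_cast (descFactorial_mul_factorial_telescope hab k).symm
    _ = _ := by rw [sum_range_sub', hR]; simp [R]

theorem zpow_sub_mul_pow_mul_zpow_sub {G₀ : Type*} [GroupWithZero G₀] (x : G₀) {γ a b k : ℕ}
    (ha : a < γ) (hb : b < γ) (hk : k < γ) :
    x ^ ((k : ℤ) - a) * x ^ (2 * γ - 2 * k - 1) * x ^ ((k : ℤ) - b) = x ^ (2 * γ - a - b - 1) := by
  rcases eq_or_ne x 0 with rfl | hx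
  · rw [zero_pow (by omega), zero_pow (by omega), mul_zero, zero_mul]
  · rw [← zpow_natCast, ← zpow_natCast, ← zpow_add₀ hx, ← zpow_add₀ hx]
    congr 1
    omega

noncomputable def matLColumnFactor (γ k : ℕ) : ℝ :=
  ((2 * γ - k - 1)! * (γ - k - 1)! : ℝ) / (k ! * (2 * γ - 2 * k - 2)!)

section

variable {γ : ℕ}

theorem matL_apply_of_le (h : ℝ) {a k : Fin γ} (hka : (k : ℕ) ≤ a) :
    matL γ h a k = h ^ ((k : ℤ) - a) *
      ((a : ℕ).descFactorial k * (2 * γ - a - k - 2)! / ((2 * γ - a - 1)! * (γ - a - 1)!)) *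
      matLColumnFactor γ k := by
  simp only [matL, if_pos hka, matLColumnFactor, ← factorial_mul_descFactorial hka]
  push_cast
  field_simp

theorem matDhat_apply_self (h : ℝ) (k : Fin γ) :
    matDhat γ h k k =
      h ^ (2 * γ - 2 * k - 1) * (2 * γ - 2 * k - 1 : ℕ) / matLColumnFactor γ k ^ 2 := by
  have hfac : (2 * γ - 2 * k - 1)! = (2 * γ - 2 * k - 1) * (2 * γ - 2 * k - 2)! := by
    rw [show 2 * γ - 2 * k - 1 = (2 * γ - 2 * k - 2) + 1 by omega, factorial_succ]
  simp only [matDhat, diagonal_apply_eq, matLColumnFactor, hfac]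
  push_cast
  field_simp

theorem matL_mul_matDhat_mul_matL_apply (h : ℝ) (a b k : Fin γ) :
    matL γ h a k * matDhat γ h k k * matL γ h b k =
      h ^ (2 * γ - 1 - a - b) / ((2 * γ - 1 - a)! * (γ - a - 1)! * (2 * γ - 1 - b)! * (γ - b - 1)!) *
        ((a : ℕ).descFactorial k * (b : ℕ).descFactorial k * (2 * γ - 1 - 2 * k) *
          (2 * γ - 1 - b - k - 1)! * (2 * γ - 1 - a - k - 1)! : ℕ) := by
  by_cases hka : (k : ℕ) ≤ a
  · by_cases hkb : (k : ℕ) ≤ b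
    · rw [matL_apply_of_le h hka, matL_apply_of_le h hkb, matDhat_apply_self,
        show 2 * γ - 1 - (a : ℕ) - b = 2 * γ - a - b - 1 by omega,
        show 2 * γ - 1 - (b : ℕ) - k - 1 = 2 * γ - b - k - 2 by omega,
        show 2 * γ - 1 - (a : ℕ) - k - 1 = 2 * γ - a - k - 2 by omega,
        show 2 * γ - 1 - (a : ℕ) = 2 * γ - a - 1 by omega,
        show 2 * γ - 1 - (b : ℕ) = 2 * γ - b - 1 by omega,
        show 2 * γ - 1 - 2 * (k : ℕ) = 2 * γ - 2 * k - 1 by omega,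
        ← zpow_sub_mul_pow_mul_zpow_sub h a.isLt b.isLt k.isLt]
      have hw : matLColumnFactor γ k ≠ 0 := by unfold matLColumnFactor; positivity
      push_cast
      field_simp
    · simp [matL, hkb, descFactorial_of_lt (not_le.mp hkb)]
  · simp [matL, hka, descFactorial_of_lt (not_le.mp hka)]

end

theorem matC_eq_matL_matDhat_matL_transpose_general (γ : ℕ) (h : ℝ) :
    matC γ h = matL γ h * matDhat γ h * (matL γ h)ᵀ := by
  ext a b
  have hab : (a : ℕ) + b < 2 * γ - 1 := by omega
  have hc : ((2 * γ - 1 - a - b : ℕ) : ℝ) ≠ 0 := by norm_cast; omega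
  calc matC γ h a b
      = h ^ (2 * γ - 1 - a - b) / ((2 * γ - 1 - a)! * (γ - a - 1)! * (2 * γ - 1 - b)! * (γ - b - 1)!) *
          (((2 * γ - 1 - b)! * (2 * γ - 1 - a)! : ℕ) / (2 * γ - 1 - a - b : ℕ)) := by
        rw [matC, show 2 * γ - 1 - (a : ℕ) - b = 2 * γ - a - b - 1 by omega]
        push_cast
        field_simp
    _ = ∑ k : Fin γ, matL γ h a k * matDhat γ h k k * matL γ h b k := by
        simp only [matL_mul_matDhat_mul_matL_apply, ← mul_sum, Fin.sum_univ_eq_sum_range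
          (fun k ↦ (((a : ℕ).descFactorial k * (b : ℕ).descFactorial k * (2 * γ - 1 - 2 * k) *
            (2 * γ - 1 - b - k - 1)! * (2 * γ - 1 - a - k - 1)! : ℕ) : ℝ)), ← Nat.cast_sum]
        rw [← sum_range_descFactorial_mul_factorial hab a.isLt, Nat.cast_mul,
          mul_div_cancel_left₀ _ hc]
    _ = (matL γ h * matDhat γ h * (matL γ h)ᵀ) a b := by
        rw [mul_apply]
        simp only [matDhat, mul_diagonal, diagonal_apply_eq, transpose_apply]

theorem matC_eq_matL_matDhat_matL_transpose (γ : ℕ) (hγ : 1 ≤ γ) (h : ℝ) (hh : h ≠ 0) :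
    matC γ h = matL γ h * matDhat γ h * (matL γ h)ᵀ :=
  matC_eq_matL_matDhat_matL_transpose_general γ h
end

section
/- Fix an integer γ ≥ 1 and a real number h. Let B(h) be the γ×γ matrix with entries b_{αβ}(h) = h^{2γ−α−β−1}/(2γ−α−β−1)! for 0 ≤ α, β ≤ γ−1, and let C(h) be the γ×γ matrix with entries c_{αβ}(h) = h^{2γ−α−β−1}/((2γ−α−β−1)·(γ−α−1)!·(γ−β−1)!). Then det B(h) = (−1)^{γ(γ−1)/2} · det C(h); equivalently, det B(h) = (−1)^{γ(γ−1)/2} · h^{γ²} · Π_{α=0}^{γ−1} (α! / (γ+α)!). In particular B(h) is invertible for every h ≠ 0. -/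
open Matrix Finset Nat

/-!
Both `B(h)` and `C(h)` are `h • (Δ M(1) Δ)` with `Δ = diag(h ^ (γ - α - 1))`, which pulls out the
factor `h ^ (γ²)` and reduces everything to `h = 1`. There `B = A D C` with `A` unitriangular and
`D = diag((-1) ^ (γ - α - 1))`, the entries of `A D C` being the partial-fraction sums
`∑ (-1)^j C(n, j) / (j + m + 1) = n! m! / (n + m + 1)!`. Next `C = L U` with `L` unitriangular; the
entries of `L U` are telescoping sums, and the diagonal of `U` multiplies out to `∏ α! / (γ + α)!`
because `∏_{j < 2γ} j! = ∏_{α < γ} α! (γ + α)!`.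
-/

theorem sum_neg_one_pow_mul_choose_div (n m : ℕ) :
    ∑ j ∈ range (n + 1), (-1 : ℝ) ^ j * n.choose j / (j + m + 1) =
      n ! * m ! / (n + m + 1)! := by
  induction n generalizing m with
  | zero =>
    rw [zero_add, sum_range_one, Nat.choose_self, Nat.factorial_zero, zero_add, Nat.factorial_succ]
    push_cast
    field_simp
    ring
  | succ n ih =>
    let f : ℕ → ℕ → ℝ := fun m j => (-1 : ℝ) ^ j * n.choose j / (j + m + 1)
    have pascal : ∀ j : ℕ, (-1 : ℝ) ^ (j + 1) * (n + 1).choose (j + 1) / ((j + 1 : ℕ) + m + 1) =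
        f m (j + 1) - f (m + 1) j := by
      intro j
      simp only [f, Nat.choose_succ_succ']
      push_cast
      ring
    have shift : ∑ j ∈ range (n + 1), f m (j + 1) + f m 0 = ∑ j ∈ range (n + 1), f m j := by
      rw [← sum_range_succ', sum_range_succ, add_eq_left]
      simp [f]
    calc _ = ∑ j ∈ range (n + 1), f m (j + 1) + f m 0 - ∑ j ∈ range (n + 1), f (m + 1) j := by
          rw [sum_range_succ', sum_congr rfl fun j _ => pascal j, sum_sub_distrib]
          simp only [f, pow_zero, Nat.choose_zero_right, Nat.cast_zero, Nat.cast_one]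
          ring
      _ = n ! * m ! / (n + m + 1)! - n ! * (m + 1)! / (n + (m + 1) + 1)! := by
          rw [shift, ih, ih]
      _ = _ := by
          rw [show n + (m + 1) + 1 = n + m + 1 + 1 by ring,
            show n + 1 + m + 1 = n + m + 1 + 1 by ring,
            Nat.factorial_succ (n + m + 1), Nat.factorial_succ n, Nat.factorial_succ m]
          push_cast
          field_simp
          ring

theorem sum_factorial_telescoping (r c n : ℕ) :
    ∑ i ∈ range (n + 1),
        ((2 * i + r + c + 1 : ℕ) : ℝ) * (i + r + c)! * (i + c)! / (i ! * (i + r)!) =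
      (n + r + c + 1)! * (n + c + 1)! / ((c + 1) * n ! * (n + r)!) := by
  induction n with
  | zero =>
    simp only [zero_add, sum_range_one, mul_zero, Nat.factorial_zero, Nat.cast_one, one_mul]
    rw [Nat.factorial_succ (r + c), Nat.factorial_succ c]
    push_cast
    field_simp
  | succ n ih =>
    rw [sum_range_succ, ih, show n + 1 + r + c + 1 = n + r + c + 1 + 1 by ring,
      show n + 1 + c + 1 = n + c + 1 + 1 by ring, show n + 1 + r + c = n + r + c + 1 by ring,
      show n + 1 + c = n + c + 1 by ring, show n + 1 + r = n + r + 1 by ring]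
    simp only [Nat.factorial_succ (n + r + c + 1), Nat.factorial_succ (n + c + 1),
      Nat.factorial_succ (n + r), Nat.factorial_succ n]
    push_cast
    field_simp
    ring

theorem sum_factorial_telescoping_min (a b c : ℕ) :
    ∑ k ∈ range (min a b + 1),
        ((a + b + c + 1 - 2 * k : ℕ) : ℝ) * (b + c - k)! * (a + c - k)! / ((a - k)! * (b - k)!) =
      (b + c + 1)! * (a + c + 1)! / ((c + 1) * a ! * b !) := by
  wlog hab : a ≤ b generalizing a b
  · rw [min_comm, add_comm a b]
    convert this b a (by omega) using 1
    · exact sum_congr rfl fun k _ => by ring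
    · ring
  obtain ⟨r, rfl⟩ : ∃ r, b = a + r := ⟨b - a, by omega⟩
  rw [min_eq_left hab, ← sum_range_reflect]
  convert sum_factorial_telescoping r c a using 1
  · refine sum_congr rfl fun i hi => ?_
    have hi : i ≤ a := Nat.lt_succ_iff.mp (mem_range.mp hi)
    rw [show a + 1 - 1 - i = a - i by omega,
      show a + (a + r) + c + 1 - 2 * (a - i) = 2 * i + r + c + 1 by omega,
      show a + r + c - (a - i) = i + r + c by omega, show a + c - (a - i) = i + c by omega,
      show a - (a - i) = i by omega, show a + r - (a - i) = i + r by omega]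

theorem prod_range_factorial_two_mul (n : ℕ) :
    ∏ j ∈ range (2 * n), j ! = ∏ i ∈ range n, (2 * i)! * (2 * i + 1)! := by
  induction n with
  | zero => simp
  | succ n ih =>
    rw [mul_add, mul_one, prod_range_succ, prod_range_succ, prod_range_succ, ih, mul_assoc]

theorem sum_sub_val_sub_one (γ : ℕ) : ∑ α : Fin γ, (γ - α - 1) = γ * (γ - 1) / 2 := by
  rw [Fin.sum_univ_eq_sum_range (fun α => γ - α - 1), ← sum_range_id,
    ← sum_range_reflect (fun i => i)]
  exact sum_congr rfl fun α _ => Nat.sub_right_comm _ _ _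

theorem add_two_mul_sum_sub_val_sub_one (γ : ℕ) : γ + 2 * ∑ α : Fin γ, (γ - α - 1) = γ ^ 2 := by
  rw [sum_sub_val_sub_one, Nat.two_mul_div_two_of_even (Nat.even_mul_pred_self γ)]
  rcases γ with _ | n
  · rfl
  · rw [Nat.add_sub_cancel]
    ring

theorem Matrix.det_of_apply_eq_pow_mul {n R : Type*} [Fintype n] [DecidableEq n] [CommRing R]
    {M N : Matrix n n R} (c : R) (e : n → ℕ) (hMN : ∀ i j, M i j = c ^ (e i + e j + 1) * N i j) :
    M.det = c ^ (Fintype.card n + 2 * ∑ i, e i) * N.det := by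
  have hM : M = c • (diagonal (fun i => c ^ e i) * N * diagonal (fun i => c ^ e i)) := by
    ext i j
    simp only [hMN, smul_apply, mul_diagonal, diagonal_mul, smul_eq_mul, pow_add]
    ring
  rw [hM, det_smul, det_mul, det_mul, det_diagonal, prod_pow_eq_pow_sum, pow_add, two_mul, pow_add]
  ring

theorem det_matB_eq_pow_mul (γ : ℕ) (h : ℝ) : (matB γ h).det = h ^ (γ ^ 2) * (matB γ 1).det := by
  rw [det_of_apply_eq_pow_mul h (fun α : Fin γ => γ - α - 1) fun α β => ?_, Fintype.card_fin,
    add_two_mul_sum_sub_val_sub_one]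
  simp only [matB, one_pow, mul_one_div]
  rw [show 2 * γ - α - β - 1 = γ - α - 1 + (γ - β - 1) + 1 by omega]

theorem det_matC_eq_pow_mul (γ : ℕ) (h : ℝ) : (matC γ h).det = h ^ (γ ^ 2) * (matC γ 1).det := by
  rw [det_of_apply_eq_pow_mul h (fun α : Fin γ => γ - α - 1) fun α β => ?_, Fintype.card_fin,
    add_two_mul_sum_sub_val_sub_one]
  simp only [matC, one_pow, mul_one_div]
  rw [show 2 * γ - α - β - 1 = γ - α - 1 + (γ - β - 1) + 1 by omega]

theorem det_matA (γ : ℕ) (h : ℝ) : (matA γ h).det = 1 := by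
  rw [det_of_isUpperTriangular (M := matA γ h) fun α β hβα => if_neg (not_le.mpr hβα)]
  exact prod_eq_one fun α _ => by simp [matA]

theorem det_matD (γ : ℕ) : (matD γ).det = (-1) ^ (γ * (γ - 1) / 2) := by
  rw [matD, det_diagonal, prod_pow_eq_pow_sum, sum_sub_val_sub_one]

theorem matA_one_mul_matD_mul_matC_one (γ : ℕ) : matA γ 1 * matD γ * matC γ 1 = matB γ 1 := by
  ext α β
  have hα := α.isLt
  have hβ := β.isLt
  rw [mul_apply]
  simp only [matA, matD, matC, matB, mul_diagonal, one_pow, ite_mul, zero_mul]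
  rw [← Equiv.sum_comp Fin.revPerm, Finset.sum_fin_eq_sum_range]
  simp only [Fin.revPerm_apply, Fin.val_rev, dite_eq_ite, ← ite_and, ← sum_filter]
  rw [show (range γ).filter (fun t => t < γ ∧ α ≤ γ - (t + 1)) = range (γ - 1 - α + 1) by
    ext; simp only [mem_filter, mem_range]; omega]
  rw [sum_congr rfl fun t ht => ?term, ← mul_sum, sum_neg_one_pow_mul_choose_div]
  case term =>
    have ht : t ≤ γ - 1 - α := Nat.lt_succ_iff.mp (mem_range.mp ht)
    show _ = 1 / ((γ - 1 - α)! * (γ - β - 1)! : ℝ) * _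
    rw [show γ - (t + 1) - α = γ - 1 - α - t by omega, show γ - (γ - (t + 1)) - 1 = t by omega,
      show 2 * γ - (γ - (t + 1)) - β - 1 = t + (γ - β - 1) + 1 by omega, Nat.cast_choose ℝ ht]
    push_cast
    field_simp
  rw [show 2 * γ - α - β - 1 = γ - 1 - α + (γ - β - 1) + 1 by omega]
  field_simp

theorem det_matB_one (γ : ℕ) :
    (matB γ 1).det = (-1) ^ (γ * (γ - 1) / 2) * (matC γ 1).det := by
  rw [← matA_one_mul_matD_mul_matC_one, det_mul, det_mul, det_matA, det_matD, one_mul]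

theorem det_matL (γ : ℕ) (h : ℝ) : (matL γ h).det = 1 := by
  rw [det_of_isLowerTriangular (matL γ h) fun α β hαβ => if_neg (not_le.mpr hαβ)]
  refine prod_eq_one fun α _ => ?_
  simp only [matL, le_refl, if_true, sub_self, zpow_zero, one_mul, Nat.sub_self, Nat.factorial_zero,
    show 2 * γ - α - α - 2 = 2 * γ - 2 * α - 2 by omega]
  rw [div_eq_one_iff_eq (by positivity)]
  push_cast
  ring

theorem matL_one_mul_matU_one (γ : ℕ) : matL γ 1 * matU γ 1 = matC γ 1 := by
  ext α β
  have hα := α.isLt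
  have hβ := β.isLt
  simp only [mul_apply, matL, matU, matC, _root_.one_zpow, one_pow, one_mul, ite_zero_mul_ite_zero]
  rw [Finset.sum_fin_eq_sum_range]
  simp only [dite_eq_ite, ← ite_and, ← sum_filter]
  rw [show (range γ).filter (fun k => k < γ ∧ k ≤ α ∧ k ≤ β) = range (min (α : ℕ) β + 1) by
    ext; simp only [mem_filter, mem_range]; omega]
  have key := sum_factorial_telescoping_min α β (2 * γ - 2 - α - β)
  simp only [show ∀ k : ℕ, α + β + (2 * γ - 2 - α - β) + 1 - 2 * k = 2 * γ - 2 * k - 1 by omega,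
    show ∀ k : ℕ, β + (2 * γ - 2 - α - β) - k = 2 * γ - α - k - 2 by omega,
    show ∀ k : ℕ, α + (2 * γ - 2 - α - β) - k = 2 * γ - k - β - 2 by omega,
    show β + (2 * γ - 2 - α - β) + 1 = 2 * γ - α - 1 by omega,
    show α + (2 * γ - 2 - α - β) + 1 = 2 * γ - β - 1 by omega] at key
  rw [sum_congr rfl fun k hk => ?term, ← mul_sum, key]
  case term =>
    have hk : k ≤ α ∧ k ≤ β := le_min_iff.mp (Nat.lt_succ_iff.mp (mem_range.mp hk))
    show _ =
      (α ! * β ! / ((2 * γ - α - 1)! * (2 * γ - β - 1)! * (γ - α - 1)! * (γ - β - 1)! : ℝ)) * _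
    rw [show 2 * γ - 2 * k - 1 = 2 * γ - 2 * k - 2 + 1 by omega, Nat.factorial_succ]
    push_cast
    field_simp
  rw [show 2 * γ - α - β - 1 = 2 * γ - 2 - α - β + 1 by omega]
  push_cast
  field_simp

theorem det_matU_one (γ : ℕ) :
    (matU γ 1).det = ∏ α ∈ range γ, (α ! / (γ + α)! : ℝ) := by
  rw [det_of_isUpperTriangular (M := matU γ 1) fun α β hβα => if_neg (not_le.mpr hβα)]
  set d : ℕ → ℝ := fun a =>
    ((a ! ^ 2 * ((2 * γ - 2 * a - 1)! * (2 * γ - 2 * a - 2)!) : ℕ) : ℝ) /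
      (((2 * γ - a - 1)! ^ 2 * (γ - a - 1)! ^ 2 : ℕ) : ℝ) with hd
  have hdiag : ∀ α : Fin γ, matU γ 1 α α = d α := by
    intro α
    simp only [matU, hd, le_refl, if_true, one_pow, one_mul, Nat.sub_self, Nat.factorial_zero,
      show 2 * γ - α - α - 2 = 2 * γ - 2 * α - 2 by omega]
    push_cast
    ring
  have hrefl : ∏ a ∈ range γ, (γ - a - 1)! = ∏ a ∈ range γ, a ! := by
    rw [← prod_range_reflect (fun a => a !)]
    exact prod_congr rfl fun a _ => by rw [Nat.sub_right_comm]
  have hshift : ∏ a ∈ range γ, (2 * γ - a - 1)! = ∏ a ∈ range γ, (γ + a)! := by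
    rw [← prod_range_reflect (fun a => (γ + a)!)]
    exact prod_congr rfl fun a ha => by
      rw [show γ + (γ - 1 - a) = 2 * γ - a - 1 by have := mem_range.mp ha; omega]
  have hsplit : ∏ a ∈ range γ, ((2 * γ - 2 * a - 1)! * (2 * γ - 2 * a - 2)!) =
      (∏ a ∈ range γ, a !) * ∏ a ∈ range γ, (γ + a)! := by
    rw [← prod_range_add, ← two_mul, prod_range_factorial_two_mul,
      ← prod_range_reflect (fun a => (2 * a)! * (2 * a + 1)!)]
    exact prod_congr rfl fun a ha => by
      rw [show 2 * γ - 2 * a - 1 = 2 * (γ - 1 - a) + 1 by have := mem_range.mp ha; omega,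
        show 2 * γ - 2 * a - 2 = 2 * (γ - 1 - a) by omega, mul_comm]
  rw [prod_congr rfl fun α _ => hdiag α, Fin.prod_univ_eq_prod_range d, prod_div_distrib,
    prod_div_distrib]
  simp only [← Nat.cast_prod, prod_mul_distrib, prod_pow, hrefl, hshift, hsplit]
  push_cast
  field_simp

theorem det_matC_one (γ : ℕ) : (matC γ 1).det = ∏ α ∈ range γ, (α ! / (γ + α)! : ℝ) := by
  rw [← matL_one_mul_matU_one, det_mul, det_matL, det_matU_one, one_mul]

theorem det_matB_general (γ : ℕ) (h : ℝ) :
    (matB γ h).det = (-1 : ℝ) ^ (γ * (γ - 1) / 2) * (matC γ h).det ∧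
    (matB γ h).det = (-1 : ℝ) ^ (γ * (γ - 1) / 2) * h ^ (γ ^ 2) *
        ∏ α ∈ Finset.range γ, ((α.factorial : ℝ) / ((γ + α).factorial : ℝ)) ∧
    (h ≠ 0 → IsUnit (matB γ h)) := by
  have hBC : (matB γ h).det = (-1) ^ (γ * (γ - 1) / 2) * (matC γ h).det := by
    rw [det_matB_eq_pow_mul, det_matC_eq_pow_mul, det_matB_one]
    ring
  have hC : (matC γ h).det = h ^ (γ ^ 2) * ∏ α ∈ range γ, (α ! / (γ + α)! : ℝ) := by
    rw [det_matC_eq_pow_mul, det_matC_one]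
  refine ⟨hBC, by rw [hBC, hC, mul_assoc], fun hh => ?_⟩
  rw [isUnit_iff_isUnit_det, isUnit_iff_ne_zero, hBC, hC]
  simp [hh, prod_ne_zero_iff, Nat.factorial_ne_zero]

theorem det_matB (γ : ℕ) (hγ : 1 ≤ γ) (h : ℝ) :
    (matB γ h).det = (-1 : ℝ) ^ (γ * (γ - 1) / 2) * (matC γ h).det ∧
    (matB γ h).det = (-1 : ℝ) ^ (γ * (γ - 1) / 2) * h ^ (γ ^ 2) *
        ∏ α ∈ Finset.range γ, ((α.factorial : ℝ) / ((γ + α).factorial : ℝ)) ∧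
    (h ≠ 0 → IsUnit (matB γ h)) :=
  det_matB_general γ h
end

section
/- Let γ ≥ 1 be an integer and let α, β be integers with 0 ≤ α ≤ γ−1 and 0 ≤ β ≤ γ−1. Then, as an identity of rational numbers, Σ_{δ=0}^{min(α,β)} (2γ−2δ−1) · (2γ−α−δ−2)! · (2γ−β−δ−2)! / ((α−δ)! · (β−δ)!) = (2γ−α−1)! · (2γ−β−1)! / ((2γ−α−β−1) · α! · β!). -/
/-!
Put `e = α - δ`, `f = β - δ` and `k = 2γ - α - β - 2` (a natural number because `α, β < γ`).
The summand becomes `(e + f + k + 1) (f + k)! (e + k)! / (e! f!)`, and it is the difference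
`T (e, f) - T (e - 1, f - 1)` of the closed form
`T (e, f) = (f + k + 1)! (e + k + 1)! / ((k + 1) e! f!)` along the diagonal; at the end of the
diagonal (`e = 0` or `f = 0`) it is `T (e, f)` itself. The sum therefore telescopes to `T (α, β)`,
which is the right-hand side.
-/

open Finset Nat

namespace CreativeTelescoping

def summand (k e f : ℕ) : ℚ :=
  ((e + f + k + 1 : ℕ) : ℚ) * (f + k)! * (e + k)! / ((e ! : ℚ) * f !)

def closedForm (k e f : ℕ) : ℚ :=
  ((f + k + 1)! : ℚ) * (e + k + 1)! / (((k + 1 : ℕ) : ℚ) * e ! * f !)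

theorem summand_succ_succ (k e f : ℕ) :
    summand k (e + 1) (f + 1) = closedForm k (e + 1) (f + 1) - closedForm k e f := by
  rw [summand, closedForm, closedForm, show f + 1 + k + 1 = f + k + 1 + 1 by ring,
    show e + 1 + k + 1 = e + k + 1 + 1 by ring, show f + 1 + k = f + k + 1 by ring,
    show e + 1 + k = e + k + 1 by ring, factorial_succ (f + k + 1), factorial_succ (e + k + 1),
    factorial_succ e, factorial_succ f]
  push_cast
  field_simp
  ring

theorem summand_zero_left (k f : ℕ) : summand k 0 f = closedForm k 0 f := by
  rw [summand, closedForm, zero_add, zero_add, factorial_succ (f + k), factorial_succ k]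
  push_cast
  field_simp

theorem summand_zero_right (k e : ℕ) : summand k e 0 = closedForm k e 0 := by
  rw [summand, closedForm, zero_add, add_zero, factorial_succ (e + k), factorial_succ k]
  push_cast
  field_simp

theorem sum_summand_diagonal (k e f : ℕ) :
    ∑ δ ∈ range (min e f + 1), summand k (e - δ) (f - δ) = closedForm k e f := by
  induction e generalizing f with
  | zero => simp [summand_zero_left]
  | succ e ih =>
    cases f with
    | zero => simp [summand_zero_right]
    | succ f =>
      rw [succ_min_succ, sum_range_succ', Nat.sub_zero, Nat.sub_zero, summand_succ_succ]
      simp only [Nat.add_sub_add_right, ih, add_sub_cancel]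

end CreativeTelescoping

open CreativeTelescoping in
theorem creative_telescoping_identity (γ α β : ℕ) (hγ : 1 ≤ γ)
    (hα : α ≤ γ - 1) (hβ : β ≤ γ - 1) :
    ∑ δ ∈ Finset.range (min α β + 1),
        (((2 * γ - 2 * δ - 1 : ℕ) : ℚ) * ((2 * γ - α - δ - 2).factorial : ℚ) *
            ((2 * γ - β - δ - 2).factorial : ℚ)) /
          (((α - δ).factorial : ℚ) * ((β - δ).factorial : ℚ))
      = (((2 * γ - α - 1).factorial : ℚ) * ((2 * γ - β - 1).factorial : ℚ)) /
          (((2 * γ - α - β - 1 : ℕ) : ℚ) * (α.factorial : ℚ) * (β.factorial : ℚ)) := by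
  set k := 2 * γ - α - β - 2
  have hsummand : ∀ δ ∈ range (min α β + 1),
      (((2 * γ - 2 * δ - 1 : ℕ) : ℚ) * ((2 * γ - α - δ - 2).factorial : ℚ) *
            ((2 * γ - β - δ - 2).factorial : ℚ)) /
          (((α - δ).factorial : ℚ) * ((β - δ).factorial : ℚ)) = summand k (α - δ) (β - δ) := by
    intro δ hδ
    have hδ' := mem_range.mp hδ
    rw [summand, show 2 * γ - 2 * δ - 1 = α - δ + (β - δ) + k + 1 by omega,
      show 2 * γ - α - δ - 2 = β - δ + k by omega, show 2 * γ - β - δ - 2 = α - δ + k by omega]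
  rw [sum_congr rfl hsummand, sum_summand_diagonal, closedForm,
    show 2 * γ - α - 1 = β + k + 1 by omega, show 2 * γ - β - 1 = α + k + 1 by omega,
    show 2 * γ - α - β - 1 = k + 1 by omega]
end

section
/- Let a be a real number and h > 0 a real number. Then the 4×4 real symmetric matrix M with rows (4a²/h³, 2a²/h², −4a²/h³, 2a²/h²), (2a²/h², (a²+1)/h, −2a²/h², (a²−1)/h), (−4a²/h³, −2a²/h², 4a²/h³, −2a²/h²), (2a²/h², (a²−1)/h, −2a²/h², (a²+1)/h) is positive semidefinite, and if moreover a ≠ 0 then the leading 2×2 block [[4a²/h³, 2a²/h²], [2a²/h², (a²+1)/h]] is positive definite. -/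
/-!
The quadratic form of the Hessian is
`a²/h³ · (2(x₀ - x₂) + h(x₁ + x₃))² + (x₁ - x₃)²/h`, i.e. the matrix is the Gram matrix `Bᵀ D B`
of the factor `B = [[2, h, -2, h], [0, 1, 0, -1]]` with the nonnegative weights
`D = diag(a²/h³, 1/h)`. Dropping the last two coordinates gives the leading block as `B'ᵀ D B'`
with `B' = [[2, h], [0, 1]]` invertible, so that block is positive definite once `a ≠ 0`.
-/

open Matrix

lemma trapezoidal_hessian_eq_gram (a : ℝ) {h : ℝ} (hh : h ≠ 0) :
    !![4 * a ^ 2 / h ^ 3,    2 * a ^ 2 / h ^ 2, -(4 * a ^ 2 / h ^ 3), 2 * a ^ 2 / h ^ 2;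
        2 * a ^ 2 / h ^ 2,    (a ^ 2 + 1) / h,   -(2 * a ^ 2 / h ^ 2), (a ^ 2 - 1) / h;
        -(4 * a ^ 2 / h ^ 3), -(2 * a ^ 2 / h ^ 2), 4 * a ^ 2 / h ^ 3, -(2 * a ^ 2 / h ^ 2);
        2 * a ^ 2 / h ^ 2,    (a ^ 2 - 1) / h,   -(2 * a ^ 2 / h ^ 2), (a ^ 2 + 1) / h] =
      (!![2, h, -2, h; 0, 1, 0, -1])ᴴ * diagonal ![a ^ 2 / h ^ 3, h⁻¹] *
        !![2, h, -2, h; 0, 1, 0, -1] := by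
  ext i j
  fin_cases i <;> fin_cases j <;> simp [mul_apply] <;> grind

lemma trapezoidal_hessian_block_eq_gram (a : ℝ) {h : ℝ} (hh : h ≠ 0) :
    !![4 * a ^ 2 / h ^ 3, 2 * a ^ 2 / h ^ 2;
        2 * a ^ 2 / h ^ 2, (a ^ 2 + 1) / h] =
      (!![2, h; 0, 1])ᴴ * diagonal ![a ^ 2 / h ^ 3, h⁻¹] * !![2, h; 0, 1] := by
  ext i j
  fin_cases i <;> fin_cases j <;> simp [mul_apply] <;> grind

theorem trapezoidal_hessian_posSemidef (a h : ℝ) (hh : 0 < h) :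
    (!![4 * a ^ 2 / h ^ 3,    2 * a ^ 2 / h ^ 2, -(4 * a ^ 2 / h ^ 3), 2 * a ^ 2 / h ^ 2;
        2 * a ^ 2 / h ^ 2,    (a ^ 2 + 1) / h,   -(2 * a ^ 2 / h ^ 2), (a ^ 2 - 1) / h;
        -(4 * a ^ 2 / h ^ 3), -(2 * a ^ 2 / h ^ 2), 4 * a ^ 2 / h ^ 3, -(2 * a ^ 2 / h ^ 2);
        2 * a ^ 2 / h ^ 2,    (a ^ 2 - 1) / h,   -(2 * a ^ 2 / h ^ 2), (a ^ 2 + 1) / h]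
      : Matrix (Fin 4) (Fin 4) ℝ).PosSemidef ∧
    (a ≠ 0 →
      (!![4 * a ^ 2 / h ^ 3, 2 * a ^ 2 / h ^ 2;
          2 * a ^ 2 / h ^ 2, (a ^ 2 + 1) / h] : Matrix (Fin 2) (Fin 2) ℝ).PosDef) := by
  refine ⟨?_, fun ha => ?_⟩
  · rw [trapezoidal_hessian_eq_gram a hh.ne']
    refine (PosSemidef.diagonal fun i => ?_).conjTranspose_mul_mul_same _
    fin_cases i <;> simp <;> positivity
  · rw [trapezoidal_hessian_block_eq_gram a hh.ne']
    have hfactor : IsUnit (!![2, h; 0, 1] : Matrix (Fin 2) (Fin 2) ℝ) := by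
      simp [isUnit_iff_isUnit_det, det_fin_two_of]
    refine (PosDef.diagonal fun i => ?_).conjTranspose_mul_mul_same
      (mulVec_injective_of_isUnit hfactor)
    fin_cases i <;> simp <;> positivity
end
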